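/- arXiv:1107.4726 — 4 statements merged into one kernel-verified Lean document; each statement's English description precedes it below -/
import Mathlib

section
/- Let (X,𝒰) be a complete Hausdorff uniform space, ≤ a partial ordering on X, and φ : X → L̄⁰(𝓕) a proper function bounded from below such that x ≤ y implies φ(y) ≤ φ(x). Then for each totally ordered subset M of X with φ(M) ⊆ L⁰(𝓕), the net {φ(m) : m ∈ M} (indexed by the directed set M) is a Cauchy net with respect to the d_{ε,λ}-uniformity on L⁰(𝓕), i.e. the uniformity of convergence in probability P. -/
open MeasureTheory ENNReal Set Filter

namespace GYY

variable {Ω : Type*} [MeasurableSpace Ω]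

/-- `L⁰(𝓕)`: equivalence classes of real-valued random variables on `(Ω,𝓕,P)`. -/
abbrev L0 (P : Measure Ω) := Ω →ₘ[P] ℝ

/-- `L̄⁰(𝓕)`: equivalence classes of extended-real-valued random variables. -/
abbrev L0e (P : Measure Ω) := Ω →ₘ[P] EReal

/-- `L⁰₊₊(𝓕)`: the (classes of) random variables that are strictly positive a.s. -/
def L0pp (P : Measure Ω) : Set (L0 P) := {ε | ∀ᵐ ω ∂P, 0 < ε ω}

/-- The equivalence class `Ĩ_A` of the indicator function of a measurable set `A`. -/
noncomputable def indL0 (P : Measure Ω) (A : Set Ω) (hA : MeasurableSet A) : L0 P :=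
  AEEqFun.mk (A.indicator fun _ => (1 : ℝ)) (aestronglyMeasurable_const.indicator hA)

/-- A random metric space (RM space) with base `(Ω,𝓕,P)`. -/
structure RMSpace (P : Measure Ω) (E : Type*) where
  d : E → E → L0 P
  d_nonneg : ∀ p q, ∀ᵐ ω ∂P, 0 ≤ d p q ω
  d_eq_zero_iff : ∀ p q, d p q = 0 ↔ p = q
  d_symm : ∀ p q, d p q = d q p
  d_triangle : ∀ p q r, ∀ᵐ ω ∂P, d p r ω ≤ d p q ω + d q r ω

/-- Convergence in probability `P` of a sequence in `L⁰(𝓕)`, i.e. convergence in the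
`(ε,λ)`-topology of `L⁰(𝓕)` with the random metric `d(p,q) = |p - q|`. -/
def TendstoProb (P : Measure Ω) (r : ℕ → L0 P) (s : L0 P) : Prop :=
  ∀ ε : ℝ, 0 < ε → ∀ lam ∈ Ioo (0 : ℝ) 1, ∃ N : ℕ, ∀ n ≥ N,
    ENNReal.ofReal (1 - lam) < P {ω | |r n ω - s ω| < ε}

namespace RMSpace

variable {P : Measure Ω} {E : Type*} (M : RMSpace P E)

/-- Convergence of a sequence in the `(ε,λ)`-topology of an RM space. -/
def TendstoEL (x : ℕ → E) (a : E) : Prop :=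
  ∀ ε : ℝ, 0 < ε → ∀ lam ∈ Ioo (0 : ℝ) 1, ∃ N : ℕ, ∀ n ≥ N,
    ENNReal.ofReal (1 - lam) < P {ω | M.d (x n) a ω < ε}

/-- Cauchy sequence for the `d_{ε,λ}`-uniformity of an RM space. -/
def CauchySeqEL (x : ℕ → E) : Prop :=
  ∀ ε : ℝ, 0 < ε → ∀ lam ∈ Ioo (0 : ℝ) 1, ∃ N : ℕ, ∀ m ≥ N, ∀ n ≥ N,
    ENNReal.ofReal (1 - lam) < P {ω | M.d (x m) (x n) ω < ε}

/-- `d_{ε,λ}`-completeness of an RM space (the `d_{ε,λ}`-uniformity is metrizable, hence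
completeness is equivalent to sequential completeness). -/
def CompleteEL : Prop := ∀ x : ℕ → E, M.CauchySeqEL x → ∃ a, M.TendstoEL x a

/-- `φ : E → L̄⁰(𝓕)` is `𝒯_{ε,λ}`-lower semicontinuous: its epigraph
`epi(φ) = {(x,r) ∈ E × L⁰ : φ(x) ≤ r}` is closed in
`(E,𝒯_{ε,λ}) × (L⁰(𝓕),𝒯_{ε,λ})` (sequentially; both topologies are metrizable). -/
def LscEL (φ : E → L0e P) : Prop :=
  ∀ (x : ℕ → E) (r : ℕ → L0 P) (a : E) (s : L0 P),
    (∀ n, ∀ᵐ ω ∂P, φ (x n) ω ≤ (r n ω : EReal)) →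
    M.TendstoEL x a → TendstoProb P r s →
    ∀ᵐ ω ∂P, φ a ω ≤ (s ω : EReal)

end RMSpace

/-- `φ` is proper on `G`: `φ(x) > -∞` a.s. for every `x ∈ G`, and `φ(x) < +∞` a.s.
for some `x ∈ G`. -/
def ProperOn {E : Type*} {P : Measure Ω} (φ : E → L0e P) (G : Set E) : Prop :=
  (∀ x ∈ G, ∀ᵐ ω ∂P, ⊥ < φ x ω) ∧ ∃ x ∈ G, ∀ᵐ ω ∂P, φ x ω < ⊤

/-- `φ` is bounded from below on `G` by an element of `L⁰(𝓕)`. -/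
def BddBelowOn {E : Type*} {P : Measure Ω} (φ : E → L0e P) (G : Set E) : Prop :=
  ∃ ξ : L0 P, ∀ x ∈ G, ∀ᵐ ω ∂P, (ξ ω : EReal) ≤ φ x ω

/-- `φ` is bounded from above on `G` by an element of `L⁰(𝓕)`. -/
def BddAboveOn {E : Type*} {P : Measure Ω} (φ : E → L0e P) (G : Set E) : Prop :=
  ∃ ξ : L0 P, ∀ x ∈ G, ∀ᵐ ω ∂P, φ x ω ≤ (ξ ω : EReal)

/-- `η = ⋀ φ(G)`, the infimum of `φ(G)` in the complete lattice `L̄⁰(𝓕)`. -/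
def IsInfOn {E : Type*} {P : Measure Ω} (φ : E → L0e P) (G : Set E) (η : L0e P) : Prop :=
  (∀ x ∈ G, ∀ᵐ ω ∂P, η ω ≤ φ x ω) ∧
    ∀ ζ : L0e P, (∀ x ∈ G, ∀ᵐ ω ∂P, ζ ω ≤ φ x ω) → ∀ᵐ ω ∂P, ζ ω ≤ η ω

/-- `η = ⋁ φ(G)`, the supremum of `φ(G)` in the complete lattice `L̄⁰(𝓕)`. -/
def IsSupOn {E : Type*} {P : Measure Ω} (φ : E → L0e P) (G : Set E) (η : L0e P) : Prop :=
  (∀ x ∈ G, ∀ᵐ ω ∂P, φ x ω ≤ η ω) ∧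
    ∀ ζ : L0e P, (∀ x ∈ G, ∀ᵐ ω ∂P, φ x ω ≤ ζ ω) → ∀ᵐ ω ∂P, η ω ≤ ζ ω

/-- `s = ⋁ g(G)` for an `L⁰(𝓕)`-valued function `g`. -/
def IsSupOnR {E : Type*} {P : Measure Ω} (g : E → L0 P) (G : Set E) (s : L0 P) : Prop :=
  (∀ x ∈ G, ∀ᵐ ω ∂P, g x ω ≤ s ω) ∧
    ∀ c : L0 P, (∀ x ∈ G, ∀ᵐ ω ∂P, g x ω ≤ c ω) → ∀ᵐ ω ∂P, s ω ≤ c ω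

/-- The Cauchy property (for the `d_{ε,λ}`-uniformity of `L⁰(𝓕)`, i.e. the uniformity of
convergence in probability) of the net `{φ(m) : m ∈ M}` indexed by `M` directed by the
order of `X`. -/
def CauchyNetProb {X : Type*} [Preorder X] {P : Measure Ω} (φ : X → L0e P) (M : Set X) : Prop :=
  ∀ ε : ℝ, 0 < ε → ∀ lam ∈ Ioo (0 : ℝ) 1, ∃ m₀ ∈ M, ∀ m₁ ∈ M, ∀ m₂ ∈ M,
    m₀ ≤ m₁ → m₀ ≤ m₂ →
      ENNReal.ofReal (1 - lam) < P {ω | |(φ m₁ ω).toReal - (φ m₂ ω).toReal| < ε}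

/-- The section filter of the net `{x_g : g ∈ G}`, `x_g = g`, indexed by `G` directed by the
order of `X`; the net is Cauchy iff this filter is a Cauchy filter. -/
def netFilter {X : Type*} [Preorder X] (G : Set X) : Filter X :=
  ⨅ g ∈ G, 𝓟 {y | y ∈ G ∧ g ≤ y}

/-- A random normed module (RN module) over `ℝ` with base `(Ω,𝓕,P)`: a left module `E`
over the algebra `L⁰(𝓕)` together with an `L⁰`-norm. -/
structure RNModule (P : Measure Ω) (E : Type*) [AddCommGroup E] where
  smul : L0 P → E → E
  one_smul : ∀ x, smul 1 x = x
  mul_smul : ∀ ξ η x, smul (ξ * η) x = smul ξ (smul η x)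
  smul_add : ∀ ξ x y, smul ξ (x + y) = smul ξ x + smul ξ y
  add_smul : ∀ ξ η x, smul (ξ + η) x = smul ξ x + smul η x
  nm : E → L0 P
  nm_nonneg : ∀ x, ∀ᵐ ω ∂P, 0 ≤ nm x ω
  nm_eq_zero_iff : ∀ x, nm x = 0 ↔ x = 0
  nm_smul : ∀ ξ x, ∀ᵐ ω ∂P, nm (smul ξ x) ω = |ξ ω| * nm x ω
  nm_add_le : ∀ x y, ∀ᵐ ω ∂P, nm (x + y) ω ≤ nm x ω + nm y ω

/-- The `𝒯_c`-neighbourhood filter of a point `r` of `L⁰(𝓕)`, with base the closed balls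
`{s : |s - r| ≤ ε}`, `ε ∈ L⁰₊₊`. -/
def cNhdsL0 (P : Measure Ω) (r : L0 P) : Filter (L0 P) :=
  ⨅ ε ∈ L0pp P, 𝓟 {s | ∀ᵐ ω ∂P, |s ω - r ω| ≤ ε ω}

namespace RNModule

variable {P : Measure Ω} {E : Type*} [AddCommGroup E] (N : RNModule P E)

/-- Convergence of sequences in the `(ε,λ)`-topology `𝒯_{ε,λ}` of an RN module. -/
def TendstoEL (x : ℕ → E) (a : E) : Prop :=
  ∀ ε : ℝ, 0 < ε → ∀ lam ∈ Ioo (0 : ℝ) 1, ∃ N' : ℕ, ∀ n ≥ N',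
    ENNReal.ofReal (1 - lam) < P {ω | N.nm (x n - a) ω < ε}

/-- Cauchy sequence for the `d_{ε,λ}`-uniformity of an RN module. -/
def CauchySeqEL (x : ℕ → E) : Prop :=
  ∀ ε : ℝ, 0 < ε → ∀ lam ∈ Ioo (0 : ℝ) 1, ∃ N' : ℕ, ∀ m ≥ N', ∀ n ≥ N',
    ENNReal.ofReal (1 - lam) < P {ω | N.nm (x m - x n) ω < ε}

/-- `𝒯_{ε,λ}`-completeness (the `d_{ε,λ}`-uniformity is metrizable, hence completeness is
equivalent to sequential completeness). -/
def CompleteEL : Prop := ∀ x : ℕ → E, N.CauchySeqEL x → ∃ a, N.TendstoEL x a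

/-- `G` is `𝒯_{ε,λ}`-closed (sequentially; `𝒯_{ε,λ}` is metrizable). -/
def ClosedEL (G : Set E) : Prop :=
  ∀ (x : ℕ → E) (a : E), (∀ n, x n ∈ G) → N.TendstoEL x a → a ∈ G

/-- `φ : G → L̄⁰(𝓕)` is `𝒯_{ε,λ}`-lower semicontinuous on `G`: its epigraph
`{(x,r) ∈ G × L⁰ : φ(x) ≤ r}` is closed in `(G,𝒯_{ε,λ}) × (L⁰(𝓕),𝒯_{ε,λ})`. -/
def LscELOn (φ : E → L0e P) (G : Set E) : Prop :=
  ∀ (x : ℕ → E) (r : ℕ → L0 P) (a : E) (s : L0 P),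
    (∀ n, x n ∈ G) → a ∈ G →
    (∀ n, ∀ᵐ ω ∂P, φ (x n) ω ≤ (r n ω : EReal)) →
    N.TendstoEL x a → TendstoProb P r s →
    ∀ᵐ ω ∂P, φ a ω ≤ (s ω : EReal)

/-- The neighbourhood filter of `x` in the locally `L⁰`-convex topology `𝒯_c`,
whose base consists of the closed balls `{y : ‖y - x‖ ≤ ε}`, `ε ∈ L⁰₊₊`. -/
def cNhds (x : E) : Filter E :=
  ⨅ ε ∈ L0pp P, 𝓟 {y | ∀ᵐ ω ∂P, N.nm (y - x) ω ≤ ε ω}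

/-- The `d_c`-uniformity of an RN module, with base `{U(ε) : ε ∈ L⁰₊₊}`,
`U(ε) = {(p,q) : ‖p - q‖ ≤ ε}`. -/
def cUniformity : Filter (E × E) :=
  ⨅ ε ∈ L0pp P, 𝓟 {p | ∀ᵐ ω ∂P, N.nm (p.1 - p.2) ω ≤ ε ω}

/-- `𝒯_c`-completeness: every Cauchy filter for the `d_c`-uniformity converges. -/
def cComplete : Prop :=
  ∀ F : Filter E, F.NeBot → F ×ˢ F ≤ N.cUniformity → ∃ x, F ≤ N.cNhds x

/-- The `𝒯_c`-closure of a subset. -/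
def cClosure (G : Set E) : Set E := {x | (N.cNhds x ⊓ 𝓟 G).NeBot}

/-- `G` is `𝒯_c`-closed. -/
def cClosed (G : Set E) : Prop := ∀ x, x ∈ N.cClosure G → x ∈ G

/-- `S` is `𝒯_c`-dense in `T`. -/
def cDenseIn (S T : Set E) : Prop := ∀ x ∈ T, x ∈ N.cClosure S

/-- The `𝒯_c`-boundary `∂_c G`. -/
def cBoundary (G : Set E) : Set E := N.cClosure G ∩ N.cClosure Gᶜ

/-- `φ : G → L̄⁰(𝓕)` is `𝒯_c`-lower semicontinuous on `G`: its epigraph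
`{(x,r) ∈ G × L⁰ : φ(x) ≤ r}` is closed in `(G,𝒯_c) × (L⁰(𝓕),𝒯_c)`. -/
def cLscOn (φ : E → L0e P) (G : Set E) : Prop :=
  ∀ (a : E) (s : L0 P), a ∈ G →
    ((N.cNhds a ×ˢ cNhdsL0 P s) ⊓
      𝓟 {p : E × L0 P | p.1 ∈ G ∧ ∀ᵐ ω ∂P, φ p.1 ω ≤ (p.2 ω : EReal)}).NeBot →
    ∀ᵐ ω ∂P, φ a ω ≤ (s ω : EReal)

/-- The countable concatenation property of a subset `G` of an RN module. -/
def HasCC (G : Set E) : Prop :=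
  ∀ (x : ℕ → E), (∀ n, x n ∈ G) →
    ∀ (A : ℕ → Set Ω) (hA : ∀ n, MeasurableSet (A n)),
      (∀ i j, i ≠ j → Disjoint (A i) (A j)) → (⋃ n, A n) = univ →
        ∃ y ∈ G, ∀ n, N.smul (indL0 P (A n) (hA n)) y = N.smul (indL0 P (A n) (hA n)) (x n)

/-- The countable concatenation property of a subset of the product `L⁰(𝓕)`-module
`E × L⁰(𝓕)` (with componentwise module operations). -/
def HasCCProd (G : Set (E × L0 P)) : Prop :=
  ∀ (p : ℕ → E × L0 P), (∀ n, p n ∈ G) →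
    ∀ (A : ℕ → Set Ω) (hA : ∀ n, MeasurableSet (A n)),
      (∀ i j, i ≠ j → Disjoint (A i) (A j)) → (⋃ n, A n) = univ →
        ∃ q ∈ G, ∀ n,
          N.smul (indL0 P (A n) (hA n)) q.1 = N.smul (indL0 P (A n) (hA n)) (p n).1 ∧
          indL0 P (A n) (hA n) * q.2 = indL0 P (A n) (hA n) * (p n).2

/-- The local property of an `L̄⁰(𝓕)`-valued function:
`Ĩ_A·φ(x) = Ĩ_A·φ(Ĩ_A·x)` for all `x ∈ E`, `A ∈ 𝓕`, i.e. `φ(x) = φ(Ĩ_A x)` a.s. on `A`. -/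
def LocalProp (φ : E → L0e P) : Prop :=
  ∀ (x : E) (A : Set Ω) (hA : MeasurableSet A),
    ∀ᵐ ω ∂P, ω ∈ A → φ x ω = φ (N.smul (indL0 P A hA) x) ω

/-- `G` is `L⁰(𝓕)`-convex. -/
def L0Convex (G : Set E) : Prop :=
  ∀ x ∈ G, ∀ y ∈ G, ∀ ξ η : L0 P,
    (∀ᵐ ω ∂P, 0 ≤ ξ ω) → (∀ᵐ ω ∂P, 0 ≤ η ω) → ξ + η = 1 →
      N.smul ξ x + N.smul η y ∈ G

/-- `G` is a.s. bounded: `⋁{‖p‖ : p ∈ G} ∈ L⁰₊(𝓕)`. -/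
def ASBounded (G : Set E) : Prop :=
  ∃ ξ : L0 P, ∀ p ∈ G, ∀ᵐ ω ∂P, N.nm p ω ≤ ξ ω

/-- Membership in the random conjugate space `E*`: `f` is an a.s. bounded random linear
functional, i.e. an `L⁰(𝓕)`-linear map `f : E → L⁰(𝓕)` with `|f(x)| ≤ ξ·‖x‖` for all `x`
for some `ξ ∈ L⁰₊(𝓕)`. -/
def IsDual (f : E → L0 P) : Prop :=
  (∀ x y, f (x + y) = f x + f y) ∧
  (∀ (ξ : L0 P) (x : E), f (N.smul ξ x) = ξ * f x) ∧
  ∃ ξ : L0 P, (∀ᵐ ω ∂P, 0 ≤ ξ ω) ∧ ∀ x, ∀ᵐ ω ∂P, |f x ω| ≤ ξ ω * N.nm x ω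

/-- `nf = ‖f‖* := ⋀{ξ ∈ L⁰₊ : |f(x)| ≤ ξ‖x‖ for all x ∈ E}`, the random norm of `E*`. -/
def IsDualNorm (f : E → L0 P) (nf : L0 P) : Prop :=
  (∀ ξ : L0 P, ((∀ᵐ ω ∂P, 0 ≤ ξ ω) ∧ ∀ x, ∀ᵐ ω ∂P, |f x ω| ≤ ξ ω * N.nm x ω) →
    ∀ᵐ ω ∂P, nf ω ≤ ξ ω) ∧
  (∀ c : L0 P,
    (∀ ξ : L0 P, ((∀ᵐ ω ∂P, 0 ≤ ξ ω) ∧ ∀ x, ∀ᵐ ω ∂P, |f x ω| ≤ ξ ω * N.nm x ω) →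
      ∀ᵐ ω ∂P, c ω ≤ ξ ω) → ∀ᵐ ω ∂P, c ω ≤ nf ω)

/-- The cone `K(f,k) = {y ∈ E : k‖y‖ ≤ f(y)}`. -/
def Kcone (f : E → L0 P) (k : L0 P) : Set E := {y | ∀ᵐ ω ∂P, k ω * N.nm y ω ≤ f y ω}

/-- `f ∈ E*∖{0}`, bounded from above on `G`, supports `G` at some point:
`f(x) = ⋁f(G)` for some `x ∈ G`. -/
def Supports (G : Set E) (f : E → L0 P) : Prop :=
  N.IsDual f ∧ f ≠ 0 ∧ (∃ ξ : L0 P, ∀ x ∈ G, ∀ᵐ ω ∂P, f x ω ≤ ξ ω) ∧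
    ∃ x ∈ G, IsSupOnR f G (f x)

/-- The set of support points of `G`: points `x ∈ G` at which some
`f ∈ E*∖{0}`, bounded from above on `G`, attains `f(x) = ⋁f(G)`. -/
def SupportPoints (G : Set E) : Set E :=
  {x | x ∈ G ∧ ∃ f : E → L0 P, N.IsDual f ∧ f ≠ 0 ∧
    (∃ ξ : L0 P, ∀ y ∈ G, ∀ᵐ ω ∂P, f y ω ≤ ξ ω) ∧ IsSupOnR f G (f x)}

end RNModule

/-! Truncated to `[-n, n]`, the a.s. decreasing random variables `φ(m)` become bounded, so their
expectations decrease along the chain and are bounded below, hence nearly constant on a tail;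
Markov's inequality then makes the truncated increments small in probability. Past a fixed
`m'` in `M`, `φ` lies between `ξ` and `φ(m')`, so for `n` large the truncation is, with
probability close to one, the identity. -/

section

variable {μ : Measure Ω} {ι : Type*} [Preorder ι] {S : Set ι} {u : ι → Ω → ℝ} {ξ : Ω → ℝ}
  {ε δ lam : ℝ}

lemma exists_nat_lt_measureReal_setOf_le [IsFiniteMeasure μ] (g : Ω → ℝ) {c : ℝ}
    (hc : c < μ.real univ) : ∃ n : ℕ, c < μ.real {ω | g ω ≤ n} := by
  have hmono : Monotone fun n : ℕ => {ω | g ω ≤ n} := fun _ _ hij _ hω => by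
    simp only [mem_ofPred_eq] at hω ⊢
    exact hω.trans (Nat.cast_le.mpr hij)
  have hunion : ⋃ n : ℕ, {ω | g ω ≤ n} = univ :=
    eq_univ_of_forall fun ω => mem_iUnion.2 ⟨⌈g ω⌉₊, by simp [Nat.le_ceil]⟩
  have htendsto := tendsto_measure_iUnion_atTop (μ := μ) hmono
  rw [hunion] at htendsto
  exact (((ENNReal.tendsto_toReal (measure_ne_top μ univ)).comp htendsto).eventually
    (eventually_gt_nhds hc)).exists

lemma exists_forall_measureReal_le_sub_lt (hS : S.Nonempty) {f : ι → Ω → ℝ}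
    (hint : ∀ i ∈ S, Integrable (f i) μ) (hanti : ∀ i ∈ S, ∀ j ∈ S, i ≤ j → f j ≤ᵐ[μ] f i)
    (hbdd : BddBelow ((fun i => ∫ ω, f i ω ∂μ) '' S)) (hε : 0 < ε) (hδ : 0 < δ) :
    ∃ i₀ ∈ S, ∀ i ∈ S, ∀ j ∈ S, i₀ ≤ i → i ≤ j → μ.real {ω | ε ≤ f i ω - f j ω} < δ := by
  set I := fun i => ∫ ω, f i ω ∂μ
  obtain ⟨_, ⟨i₀, hi₀, rfl⟩, hI₀⟩ := Real.lt_sInf_add_pos (hS.image I) (mul_pos hε hδ)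
  refine ⟨i₀, hi₀, fun i hi j hj h₀i hij => ?_⟩
  have hmarkov := mul_meas_ge_le_integral_of_nonneg
    (hanti i hi j hj hij |>.mono fun _ h => sub_nonneg.2 h) ((hint i hi).sub (hint j hj)) ε
  rw [integral_sub (hint i hi) (hint j hj)] at hmarkov
  have hIi : I i ≤ I i₀ := integral_mono_ae (hint i hi) (hint i₀ hi₀) (hanti i₀ hi₀ i hi h₀i)
  have hIj : sInf (I '' S) ≤ I j := csInf_le hbdd ⟨j, hj, rfl⟩
  exact lt_of_mul_lt_mul_left (a := ε) (by linarith) hε.le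

lemma exists_forall_measureReal_le_sub_projIcc_lt [IsFiniteMeasure μ] (hS : S.Nonempty)
    (hmeas : ∀ i ∈ S, AEMeasurable (u i) μ) (hanti : ∀ i ∈ S, ∀ j ∈ S, i ≤ j → u j ≤ᵐ[μ] u i)
    {a b : ℝ} (hab : a ≤ b) (hε : 0 < ε) (hδ : 0 < δ) :
    ∃ i₀ ∈ S, ∀ i ∈ S, ∀ j ∈ S, i₀ ≤ i → i ≤ j →
      μ.real {ω | ε ≤ (projIcc a b hab (u i ω) : ℝ) - projIcc a b hab (u j ω)} < δ := by
  have hmem : ∀ i ω, (projIcc a b hab (u i ω) : ℝ) ∈ Icc a b := fun i ω =>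
    (projIcc a b hab (u i ω)).2
  have hint : ∀ i ∈ S, Integrable (fun ω => (projIcc a b hab (u i ω) : ℝ)) μ := fun i hi =>
    .of_mem_Icc a b ((continuous_subtype_val.comp continuous_projIcc).measurable.comp_aemeasurable
      (hmeas i hi)) (ae_of_all _ (hmem i))
  refine exists_forall_measureReal_le_sub_lt hS hint (fun i hi j hj hij =>
    (hanti i hi j hj hij).mono fun _ h => monotone_projIcc hab h) ⟨μ.real univ * a, ?_⟩ hε hδ
  rintro _ ⟨i, hi, rfl⟩
  simpa using integral_mono (integrable_const a) (hint i hi) fun ω => (hmem i ω).1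

lemma exists_forall_lt_measureReal_abs_sub_lt_of_le [IsProbabilityMeasure μ] (hS : S.Nonempty)
    (hmeas : ∀ i ∈ S, AEMeasurable (u i) μ)
    (hanti : ∀ i ∈ S, ∀ j ∈ S, i ≤ j → u j ≤ᵐ[μ] u i) (hξ : ∀ i ∈ S, ξ ≤ᵐ[μ] u i)
    (hε : 0 < ε) (hlam : 0 < lam) :
    ∃ i₀ ∈ S, ∀ i ∈ S, ∀ j ∈ S, i₀ ≤ i → i ≤ j →
      1 - lam < μ.real {ω | |u i ω - u j ω| < ε} := by
  obtain ⟨i₁, hi₁⟩ := hS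
  obtain ⟨n, hG⟩ : ∃ n : ℕ, 1 - lam / 2 < μ.real {ω | max (-ξ ω) (u i₁ ω) ≤ n} :=
    exists_nat_lt_measureReal_setOf_le _ (by simp; linarith)
  have hn : -(n : ℝ) ≤ n := neg_le_self n.cast_nonneg
  obtain ⟨i₀, ⟨hi₀, h₁₀⟩, hC⟩ := exists_forall_measureReal_le_sub_projIcc_lt
    (S := {i ∈ S | i₁ ≤ i}) ⟨i₁, hi₁, le_rfl⟩ (fun i hi => hmeas i hi.1)
    (fun i hi j hj => hanti i hi.1 j hj.1) hn hε (half_pos hlam)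
  refine ⟨i₀, hi₀, fun i hi j hj h₀i hij => ?_⟩
  have h₁i := h₁₀.trans h₀i
  set C := {ω | ε ≤ (projIcc (-n : ℝ) n hn (u i ω) : ℝ) - projIcc (-n : ℝ) n hn (u j ω)}
  have hCij : μ.real C < lam / 2 := hC i ⟨hi, h₁i⟩ j ⟨hj, h₁i.trans hij⟩ h₀i hij
  -- where `-ξ` and `u i₁` are bounded by `n`, so are all `|u k|` with `i₁ ≤ k`
  have hsub : ∀ᵐ ω ∂μ, ω ∈ {ω | max (-ξ ω) (u i₁ ω) ≤ n} \ C →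
      ω ∈ {ω | |u i ω - u j ω| < ε} := by
    filter_upwards [hξ j hj, hanti i₁ hi₁ i hi h₁i, hanti i hi j hj hij]
      with ω hξj hi₁i hji hω
    simp only [C, Set.mem_sdiff, mem_ofPred_eq, max_le_iff, not_le] at hω ⊢
    obtain ⟨⟨hξn, hi₁n⟩, hlt⟩ := hω
    rw [projIcc_of_mem hn ⟨by linarith, by linarith⟩,
      projIcc_of_mem hn ⟨by linarith, by linarith⟩] at hlt
    rw [abs_of_nonneg (sub_nonneg.2 hji)]
    exact hlt
  have hdiff := le_measureReal_sdiff (μ := μ) (s₁ := {ω | max (-ξ ω) (u i₁ ω) ≤ n}) (s₂ := C)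
  have hmono : μ.real ({ω | max (-ξ ω) (u i₁ ω) ≤ n} \ C) ≤
      μ.real {ω | |u i ω - u j ω| < ε} :=
    ENNReal.toReal_mono (measure_ne_top _ _) (measure_mono_ae hsub)
  linarith

lemma exists_forall_lt_measureReal_abs_sub_lt [IsProbabilityMeasure μ]
    (hchain : IsChain (· ≤ ·) S) (hS : S.Nonempty) (hmeas : ∀ i ∈ S, AEMeasurable (u i) μ)
    (hanti : ∀ i ∈ S, ∀ j ∈ S, i ≤ j → u j ≤ᵐ[μ] u i) (hξ : ∀ i ∈ S, ξ ≤ᵐ[μ] u i)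
    (hε : 0 < ε) (hlam : 0 < lam) :
    ∃ i₀ ∈ S, ∀ i ∈ S, ∀ j ∈ S, i₀ ≤ i → i₀ ≤ j →
      1 - lam < μ.real {ω | |u i ω - u j ω| < ε} := by
  obtain ⟨i₀, hi₀, h⟩ := exists_forall_lt_measureReal_abs_sub_lt_of_le hS hmeas hanti hξ hε hlam
  refine ⟨i₀, hi₀, fun i hi j hj h₀i h₀j => ?_⟩
  rcases hchain.total hi hj with hij | hji
  · exact h i hi j hj h₀i hij
  · simpa only [abs_sub_comm] using h j hj i hi h₀j hji

end

theorem cauchyNetProb_of_antitone_general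
    {X : Type*} [PartialOrder X]
    {Ω : Type*} [MeasurableSpace Ω] {P : Measure Ω} [IsProbabilityMeasure P]
    (φ : X → L0e P)
    (hbdd : BddBelowOn φ Set.univ)
    (hanti : ∀ x y : X, x ≤ y → ∀ᵐ ω ∂P, φ y ω ≤ φ x ω)
    (M : Set X) (hchain : IsChain (· ≤ ·) M) (hne : M.Nonempty)
    (hML0 : ∀ m ∈ M, ∀ᵐ ω ∂P, φ m ω ≠ ⊥ ∧ φ m ω ≠ ⊤) :
    CauchyNetProb φ M := by
  obtain ⟨ξ, hξ⟩ := hbdd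
  have hanti_toReal : ∀ a ∈ M, ∀ b ∈ M, a ≤ b →
      (fun ω => (φ b ω).toReal) ≤ᵐ[P] fun ω => (φ a ω).toReal := fun a ha b hb hab => by
    filter_upwards [hanti a b hab, hML0 a ha, hML0 b hb] with ω hba ha hb
    exact EReal.toReal_le_toReal hba hb.1 ha.2
  have hξ_toReal : ∀ m ∈ M, (ξ : Ω → ℝ) ≤ᵐ[P] fun ω => (φ m ω).toReal := fun m hm => by
    filter_upwards [hξ m (mem_univ m), hML0 m hm] with ω hξm hm
    simpa using EReal.toReal_le_toReal hξm (EReal.coe_ne_bot _) hm.2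
  intro ε hε lam hlam
  obtain ⟨m₀, hm₀, h⟩ := exists_forall_lt_measureReal_abs_sub_lt hchain hne
    (fun m _ => (φ m).aestronglyMeasurable.aemeasurable.ereal_toReal)
    hanti_toReal hξ_toReal hε hlam.1
  refine ⟨m₀, hm₀, fun m₁ hm₁ m₂ hm₂ h₀₁ h₀₂ => ?_⟩
  exact (ENNReal.ofReal_lt_iff_lt_toReal (by linarith [hlam.2]) (measure_ne_top _ _)).2
    (h m₁ hm₁ m₂ hm₂ h₀₁ h₀₂)

/-- Lemma 2.5. Let `(X,𝒰)` be a complete Hausdorff uniform space, `≤` a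
partial ordering on `X`, and `φ : X → L̄⁰(𝓕)` proper and bounded from below, with
`x ≤ y ⇒ φ(y) ≤ φ(x)`. Then for each (nonempty) totally ordered subset `M` of `X` with
`φ(M) ⊆ L⁰(𝓕)`, the net `{φ(m) : m ∈ M}` is a Cauchy net for the `d_{ε,λ}`-uniformity
of `L⁰(𝓕)`, i.e. the uniformity of convergence in probability `P`. -/
theorem cauchyNetProb_of_antitone
    {X : Type*} [UniformSpace X] [CompleteSpace X] [T2Space X] [PartialOrder X]
    {Ω : Type*} [MeasurableSpace Ω] {P : Measure Ω} [IsProbabilityMeasure P]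
    (φ : X → L0e P)
    (hproper : ProperOn φ Set.univ)
    (hbdd : BddBelowOn φ Set.univ)
    (hanti : ∀ x y : X, x ≤ y → ∀ᵐ ω ∂P, φ y ω ≤ φ x ω)
    (M : Set X) (hchain : IsChain (· ≤ ·) M) (hne : M.Nonempty)
    (hML0 : ∀ m ∈ M, ∀ᵐ ω ∂P, φ m ω ≠ ⊥ ∧ φ m ω ≠ ⊤) :
    CauchyNetProb φ M :=
  cauchyNetProb_of_antitone_general φ hbdd hanti M hchain hne hML0

end GYY
end

section
/- Let (X,𝒰) be a complete Hausdorff uniform space, ≤ a partial ordering on X, and φ : X → L̄⁰(𝓕) a proper function bounded from below by some η₀ ∈ L⁰(𝓕). Assume: (1) for each x ∈ X, the set S(x) = {y ∈ X : x ≤ y} is closed; (2) x ≤ y implies φ(y) ≤ φ(x); (3) whenever G is a totally ordered subset of X such that the net {φ(g) : g ∈ G} is a Cauchy net in L⁰(𝓕) with respect to the d_{ε,λ}-uniformity, the net {x_g : g ∈ G} with x_g = g is a Cauchy net in X. Then for each x₀ ∈ dom(φ) there exists x̄ ∈ dom(φ) such that x₀ ≤ x̄ and x̄ is a maximal element of X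 with respect to ≤. -/
open MeasureTheory ENNReal Set Filter

namespace GYY

variable {Ω : Type*} [MeasurableSpace Ω]

/-! By Zorn's lemma it suffices that every chain `C` above `x₀` has an upper bound. On `C`, `φ` is
antitone and squeezed between `η₀` and `φ x₀`, both a.s. finite. Truncating at a level `K` that
these exceed only with small probability, the integrals of the truncated `φ g` decrease along `C`
towards their infimum, and Markov's inequality makes `{φ g : g ∈ C}` Cauchy in probability.
Hypothesis (3) turns this into a Cauchy net in `X`; its limit bounds `C` because the sets
`{y | g ≤ y}` are closed. -/

open Topology

section ConvergenceInProbability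

variable {μ : Measure Ω}

theorem exists_measure_lt_abs_lt [IsFiniteMeasure μ] {g : Ω → ℝ} (hg : AEMeasurable g μ)
    {δ : ℝ} (hδ : 0 < δ) : ∃ K : ℝ, μ {ω | K < |g ω|} < ENNReal.ofReal δ := by
  have htight := tendsto_measure_norm_gt_of_isTightMeasureSet
    (isTightMeasureSet_singleton (μ := μ.map g))
  simp only [mem_singleton_iff, iSup_iSup_eq_left, Real.norm_eq_abs] at htight
  obtain ⟨K, hK⟩ := (htight.eventually (gt_mem_nhds (ENNReal.ofReal_pos.2 hδ))).exists
  refine ⟨K, ?_⟩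
  rwa [Measure.map_apply_of_aemeasurable hg
    (measurableSet_lt measurable_const continuous_abs.measurable)] at hK

variable {ι : Type*} [Preorder ι]

theorem exists_forall_measure_le_sub_le_of_antitone (f : ι → Ω → ℝ) {c : Set ι}
    (hc : c.Nonempty) (hf : ∀ i ∈ c, Integrable (f i) μ)
    (hbdd : BddBelow ((fun i => ∫ ω, f i ω ∂μ) '' c))
    (hanti : ∀ i ∈ c, ∀ j ∈ c, i ≤ j → f j ≤ᵐ[μ] f i) {ε δ : ℝ} (hε : 0 < ε) (hδ : 0 < δ) :
    ∃ i₀ ∈ c, ∀ i ∈ c, i₀ ≤ i → μ {ω | ε ≤ f i₀ ω - f i ω} ≤ ENNReal.ofReal δ := by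
  -- `i₀` comes within `ε * δ` of the infimum of the integrals; Markov bounds the rest.
  obtain ⟨_, ⟨i₀, hi₀, rfl⟩, hi₀_lt⟩ := exists_lt_of_csInf_lt (hc.image _)
    (lt_add_of_pos_right (sInf ((fun i => ∫ ω, f i ω ∂μ) '' c)) (mul_pos hε hδ))
  refine ⟨i₀, hi₀, fun i hi hle => ?_⟩
  have hint : Integrable (fun ω => f i₀ ω - f i ω) μ := (hf i₀ hi₀).sub (hf i hi)
  have hmarkov := mul_meas_ge_le_integral_of_nonneg
    ((hanti i₀ hi₀ i hi hle).mono fun ω h => sub_nonneg.2 h) hint ε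
  have hgap : ∫ ω, f i₀ ω - f i ω ∂μ < ε * δ := by
    rw [integral_sub (hf i₀ hi₀) (hf i hi)]
    linarith [csInf_le hbdd ⟨i, hi, rfl⟩]
  rw [measureReal_def] at hmarkov
  rw [← ENNReal.ofReal_toReal (hint.measure_ge_lt_top hε).ne]
  exact ENNReal.ofReal_le_ofReal (le_of_mul_le_mul_left (by linarith) hε)

theorem exists_forall_measure_le_sub_le_of_antitone_of_bounded [IsFiniteMeasure μ]
    (f : ι → Ω → ℝ) {c : Set ι} (hc : c.Nonempty) (hf : ∀ i ∈ c, AEStronglyMeasurable (f i) μ)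
    {C : ℝ} (hC : ∀ i ω, ‖f i ω‖ ≤ C) (hanti : ∀ i ∈ c, ∀ j ∈ c, i ≤ j → f j ≤ᵐ[μ] f i)
    {ε δ : ℝ} (hε : 0 < ε) (hδ : 0 < δ) :
    ∃ i₀ ∈ c, ∀ i ∈ c, i₀ ≤ i → μ {ω | ε ≤ f i₀ ω - f i ω} ≤ ENNReal.ofReal δ :=
  exists_forall_measure_le_sub_le_of_antitone f hc
    (fun i hi => .of_bound (hf i hi) C (.of_forall (hC i)))
    ⟨-(C * μ.real univ), by
      rintro _ ⟨i, -, rfl⟩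
      exact neg_le_of_abs_le (norm_integral_le_of_norm_le_const (.of_forall (hC i)))⟩
    hanti hε hδ

theorem exists_forall_measure_le_abs_sub_le_of_antitone [IsFiniteMeasure μ] (f : ι → Ω → ℝ)
    {c : Set ι} (hc : c.Nonempty) (hf : ∀ i ∈ c, AEStronglyMeasurable (f i) μ)
    {L U : Ω → ℝ} (hL : AEMeasurable L μ) (hU : AEMeasurable U μ)
    (hLU : ∀ i ∈ c, ∀ᵐ ω ∂μ, L ω ≤ f i ω ∧ f i ω ≤ U ω)
    (hanti : ∀ i ∈ c, ∀ j ∈ c, i ≤ j → f j ≤ᵐ[μ] f i) {ε δ : ℝ} (hε : 0 < ε) (hδ : 0 < δ) :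
    ∃ i₀ ∈ c, ∀ i₁ ∈ c, ∀ i₂ ∈ c, i₀ ≤ i₁ → i₀ ≤ i₂ →
      μ {ω | ε ≤ |f i₁ ω - f i₂ ω|} ≤ ENNReal.ofReal δ := by
  set M : Ω → ℝ := fun ω => max |L ω| |U ω|
  obtain ⟨K, hK⟩ := exists_measure_lt_abs_lt (hL.abs.max hU.abs : AEMeasurable M μ) (half_pos hδ)
  -- The truncation `ψ` of `f` at level `K` is bounded and agrees with `f` off `{K < |M|}`.
  set ψ : ι → Ω → ℝ := fun i ω => max (-K) (min K (f i ω))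
  have hψ_bound : ∀ i ω, ‖ψ i ω‖ ≤ |K| := fun i ω =>
    Real.norm_eq_abs _ ▸ abs_le.2 ⟨neg_le_neg (le_abs_self K) |>.trans (le_max_left _ _),
      max_le (neg_le_abs K) ((min_le_left _ _).trans (le_abs_self K))⟩
  have hψ_anti : ∀ i ∈ c, ∀ j ∈ c, i ≤ j → ψ j ≤ᵐ[μ] ψ i := fun i hi j hj hij =>
    (hanti i hi j hj hij).mono fun ω h => max_le_max le_rfl (min_le_min le_rfl h)
  have hψ_meas : ∀ i ∈ c, AEStronglyMeasurable (ψ i) μ := fun i hi =>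
    (continuous_const.max (continuous_const.min continuous_id)).comp_aestronglyMeasurable (hf i hi)
  obtain ⟨i₀, hi₀, hmarkov⟩ := exists_forall_measure_le_sub_le_of_antitone_of_bounded ψ hc
    hψ_meas hψ_bound hψ_anti hε (by positivity : 0 < δ / 4)
  refine ⟨i₀, hi₀, fun i₁ h₁ i₂ h₂ h01 h02 => ?_⟩
  have hcover : {ω | ε ≤ |f i₁ ω - f i₂ ω|} ≤ᵐ[μ] ({ω | K < |M ω|} ∪
      {ω | ε ≤ ψ i₀ ω - ψ i₁ ω} ∪ {ω | ε ≤ ψ i₀ ω - ψ i₂ ω} : Set Ω) := by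
    filter_upwards [hLU i₀ hi₀, hLU i₁ h₁, hLU i₂ h₂, hanti i₀ hi₀ i₁ h₁ h01,
      hanti i₀ hi₀ i₂ h₂ h02] with ω b₀ b₁ b₂ a₁ a₂ hω
    change ε ≤ |f i₁ ω - f i₂ ω| at hω
    show (K < |M ω| ∨ ε ≤ ψ i₀ ω - ψ i₁ ω) ∨ ε ≤ ψ i₀ ω - ψ i₂ ω
    by_contra! hout
    obtain ⟨⟨hMK, h₁ε⟩, h₂ε⟩ := hout
    have hLK : |L ω| ≤ K := (le_max_left _ _).trans ((le_abs_self _).trans hMK)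
    have hUK : |U ω| ≤ K := (le_max_right _ _).trans ((le_abs_self _).trans hMK)
    have hψ_eq : ∀ i, L ω ≤ f i ω → f i ω ≤ U ω → ψ i ω = f i ω := fun i hl hu =>
      (congrArg _ (min_eq_right (hu.trans (le_abs_self _ |>.trans hUK)))).trans
        (max_eq_right (neg_le.1 ((neg_le_abs _).trans hLK) |>.trans hl))
    rw [hψ_eq i₀ b₀.1 b₀.2, hψ_eq i₁ b₁.1 b₁.2] at h₁ε
    rw [hψ_eq i₀ b₀.1 b₀.2, hψ_eq i₂ b₂.1 b₂.2] at h₂ε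
    exact hω.not_gt (abs_sub_lt_iff.2 ⟨by linarith, by linarith⟩)
  calc μ {ω | ε ≤ |f i₁ ω - f i₂ ω|}
      ≤ μ {ω | K < |M ω|} + μ {ω | ε ≤ ψ i₀ ω - ψ i₁ ω} +
          μ {ω | ε ≤ ψ i₀ ω - ψ i₂ ω} :=
        (measure_mono_ae hcover).trans ((measure_union_le _ _).trans
          (add_le_add (measure_union_le _ _) le_rfl))
    _ ≤ ENNReal.ofReal (δ / 2) + ENNReal.ofReal (δ / 4) + ENNReal.ofReal (δ / 4) :=
        add_le_add (add_le_add hK.le (hmarkov i₁ h₁ h01)) (hmarkov i₂ h₂ h02)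
    _ = ENNReal.ofReal δ := by
        rw [← ENNReal.ofReal_add (by positivity) (by positivity),
          ← ENNReal.ofReal_add (by positivity) (by positivity)]
        ring_nf

theorem ofReal_one_sub_lt_measure_compl [IsProbabilityMeasure μ] {s : Set Ω} {lam : ℝ}
    (hlam : lam ∈ Ioo (0 : ℝ) 1) (hs : μ s ≤ ENNReal.ofReal (lam / 2)) :
    ENNReal.ofReal (1 - lam) < μ sᶜ := by
  have hcover : 1 ≤ μ s + μ sᶜ :=
    measure_univ (μ := μ) ▸ union_compl_self s ▸ measure_union_le s sᶜ
  have hgap : ENNReal.ofReal (lam / 2) + ENNReal.ofReal (1 - lam) < 1 := by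
    rw [← ENNReal.ofReal_add (by linarith [hlam.1]) (by linarith [hlam.2]), ← ENNReal.ofReal_one,
      ENNReal.ofReal_lt_ofReal_iff one_pos]
    linarith [hlam.1]
  by_contra! h
  exact (hcover.trans (add_le_add hs h)).not_gt hgap

end ConvergenceInProbability

theorem cauchyNetProb_of_forall_le {X : Type*} [Preorder X]
    {P : Measure Ω} [IsProbabilityMeasure P] {φ : X → L0e P} {η₀ : L0 P} {x₀ : X} {c : Set X}
    (hc : c.Nonempty) (hx₀c : ∀ g ∈ c, x₀ ≤ g) (hx₀ : ∀ᵐ ω ∂P, φ x₀ ω < ⊤)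
    (hbdd : ∀ g ∈ c, ∀ᵐ ω ∂P, (η₀ ω : EReal) ≤ φ g ω)
    (hanti : ∀ x y : X, x ≤ y → ∀ᵐ ω ∂P, φ y ω ≤ φ x ω) : CauchyNetProb φ c := by
  intro ε hε lam hlam
  have hbounds : ∀ g ∈ c, ∀ᵐ ω ∂P, η₀ ω ≤ (φ g ω).toReal ∧ (φ g ω).toReal ≤ (φ x₀ ω).toReal := by
    intro g hg
    filter_upwards [hbdd g hg, hanti x₀ g (hx₀c g hg), hx₀] with ω hlow hup htop
    exact ⟨EReal.toReal_coe (η₀ ω) ▸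
        EReal.toReal_le_toReal hlow (EReal.coe_ne_bot _) (hup.trans_lt htop).ne,
      EReal.toReal_le_toReal hup (ne_bot_of_le_ne_bot (EReal.coe_ne_bot _) hlow) htop.ne⟩
  have hanti_real : ∀ g ∈ c, ∀ g' ∈ c, g ≤ g' →
      (fun ω => (φ g' ω).toReal) ≤ᵐ[P] fun ω => (φ g ω).toReal := by
    intro g hg g' hg' hle
    filter_upwards [hbdd g' hg', hanti g g' hle, hanti x₀ g (hx₀c g hg), hx₀]
      with ω hlow h hup htop
    exact EReal.toReal_le_toReal h (ne_bot_of_le_ne_bot (EReal.coe_ne_bot _) hlow)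
      (hup.trans_lt htop).ne
  have hmeas : ∀ g : X, Measurable fun ω => (φ g ω).toReal := fun g =>
    measurable_ereal_toReal.comp (φ g).stronglyMeasurable.measurable
  obtain ⟨m₀, hm₀, hm⟩ := exists_forall_measure_le_abs_sub_le_of_antitone
    (fun g ω => (φ g ω).toReal) hc (fun g _ => (hmeas g).aestronglyMeasurable)
    η₀.aemeasurable (hmeas x₀).aemeasurable hbounds hanti_real hε (half_pos hlam.1)
  refine ⟨m₀, hm₀, fun m₁ h₁ m₂ h₂ h01 h02 => ?_⟩
  simpa only [compl_ofPred, not_le] using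
    ofReal_one_sub_lt_measure_compl hlam (hm m₁ h₁ m₂ h₂ h01 h02)

theorem le_of_netFilter_le_nhds {X : Type*} [TopologicalSpace X] [Preorder X] {c : Set X}
    [(netFilter c).NeBot] {x : X} (hx : netFilter c ≤ 𝓝 x) {g : X} (hg : g ∈ c)
    (hclosed : IsClosed {y | g ≤ y}) : g ≤ x :=
  hclosed.mem_of_tendsto (tendsto_id.mono_right hx)
    (mem_iInf_of_mem g (mem_iInf_of_mem hg (mem_principal.2 fun _ hy => hy.2)))

theorem exists_maximal_above_general
    {X : Type*} [UniformSpace X] [CompleteSpace X] [PartialOrder X]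
    {Ω : Type*} [MeasurableSpace Ω] {P : Measure Ω} [IsProbabilityMeasure P]
    (φ : X → L0e P) (η₀ : L0 P)
    (hbdd : ∀ x : X, ∀ᵐ ω ∂P, (η₀ ω : EReal) ≤ φ x ω)
    (hclosed : ∀ x : X, IsClosed {y : X | x ≤ y})
    (hanti : ∀ x y : X, x ≤ y → ∀ᵐ ω ∂P, φ y ω ≤ φ x ω)
    (hcauchy : ∀ G : Set X, IsChain (· ≤ ·) G → G.Nonempty →
      (∀ g ∈ G, ∀ᵐ ω ∂P, φ g ω ≠ ⊥ ∧ φ g ω ≠ ⊤) →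
      CauchyNetProb φ G → Cauchy (netFilter G))
    (x₀ : X) (hx₀ : ∀ᵐ ω ∂P, φ x₀ ω < ⊤) :
    ∃ xb : X, (∀ᵐ ω ∂P, φ xb ω < ⊤) ∧ x₀ ≤ xb ∧ ∀ y : X, xb ≤ y → y = xb := by
  have hdom : ∀ y, x₀ ≤ y → ∀ᵐ ω ∂P, φ y ω < ⊤ := fun y hy => by
    filter_upwards [hanti x₀ y hy, hx₀] with ω h h₀ using h.trans_lt h₀
  have hchain_bdd : ∀ c ⊆ {y | x₀ ≤ y}, IsChain (· ≤ ·) c → ∀ y ∈ c,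
      ∃ ub ∈ {y | x₀ ≤ y}, ∀ z ∈ c, z ≤ ub := by
    intro c hc hchain y hy
    have hfinite : ∀ g ∈ c, ∀ᵐ ω ∂P, φ g ω ≠ ⊥ ∧ φ g ω ≠ ⊤ := fun g hg => by
      filter_upwards [hbdd g, hdom g (hc hg)] with ω hlow htop
      exact ⟨ne_bot_of_le_ne_bot (EReal.coe_ne_bot _) hlow, htop.ne⟩
    have hC := hcauchy c hchain ⟨y, hy⟩ hfinite
      (cauchyNetProb_of_forall_le ⟨y, hy⟩ (fun g hg => hc hg) hx₀ (fun g _ => hbdd g) hanti)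
    obtain ⟨xb, hxb⟩ := CompleteSpace.complete hC
    have := hC.1
    exact ⟨xb, (hc hy).trans (le_of_netFilter_le_nhds hxb hy (hclosed y)),
      fun z hz => le_of_netFilter_le_nhds hxb hz (hclosed z)⟩
  obtain ⟨xb, hx₀xb, hmax⟩ := zorn_le_nonempty₀ {y | x₀ ≤ y} hchain_bdd x₀ le_rfl
  exact ⟨xb, hdom xb hx₀xb, hx₀xb, fun y hy => le_antisymm (hmax.2 (hx₀xb.trans hy) hy) hy⟩

/-- Theorem 2.6. A general order-theoretic principle: under hypotheses
(1) each `S(x) = {y : x ≤ y}` is closed, (2) `φ` is antitone, (3) if the net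
`{φ(g) : g ∈ G}` of a totally ordered `G ⊆ X` (with `φ(G) ⊆ L⁰`) is Cauchy in probability
then the net `{x_g = g : g ∈ G}` is a Cauchy net in `X`, every `x₀ ∈ dom(φ)` is dominated
by a maximal element `x̄ ∈ dom(φ)` of `X`. -/
theorem exists_maximal_above
    {X : Type*} [UniformSpace X] [CompleteSpace X] [T2Space X] [PartialOrder X]
    {Ω : Type*} [MeasurableSpace Ω] {P : Measure Ω} [IsProbabilityMeasure P]
    (φ : X → L0e P) (η₀ : L0 P)
    (hproper : ProperOn φ Set.univ)
    (hbdd : ∀ x : X, ∀ᵐ ω ∂P, (η₀ ω : EReal) ≤ φ x ω)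
    (hclosed : ∀ x : X, IsClosed {y : X | x ≤ y})
    (hanti : ∀ x y : X, x ≤ y → ∀ᵐ ω ∂P, φ y ω ≤ φ x ω)
    (hcauchy : ∀ G : Set X, IsChain (· ≤ ·) G → G.Nonempty →
      (∀ g ∈ G, ∀ᵐ ω ∂P, φ g ω ≠ ⊥ ∧ φ g ω ≠ ⊤) →
      CauchyNetProb φ G → Cauchy (netFilter G))
    (x₀ : X) (hx₀ : ∀ᵐ ω ∂P, φ x₀ ω < ⊤) :
    ∃ xb : X, (∀ᵐ ω ∂P, φ xb ω < ⊤) ∧ x₀ ≤ xb ∧ ∀ y : X, xb ≤ y → y = xb :=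
  exists_maximal_above_general φ η₀ hbdd hclosed hanti hcauchy x₀ hx₀

end GYY
end

section
/- Ekeland's variational principle on a d_{ε,λ}-complete RM space: Let (E,d) be a d_{ε,λ}-complete random metric space with base (Ω,𝓕,P) and φ : E → L̄⁰(𝓕) a proper, 𝒯_{ε,λ}-lower semicontinuous function which is bounded from below. Then for each x₀ ∈ dom(φ) there exists v ∈ dom(φ) such that: (1) φ(v) ≤ φ(x₀) − d(x₀,v); and (2) for each x ∈ E with x ≠ v, φ(x) ≰ φ(v) − d(x,v), i.e. there exists A_x ∈ 𝓕 with P(A_x) > 0 such that φ(x) > φ(v) − d(x,v) a.s. on A_x. -/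
open MeasureTheory ENNReal Set Filter

namespace GYY

variable {Ω : Type*} [MeasurableSpace Ω]

/-!
Order `E` by `y ≼ x` iff `φ(y) + d(x,y) ≤ φ(x)` a.s. Composing `φ` with a strictly increasing
bounded map `EReal → ℝ` and integrating gives a real functional `F` that is monotone for `≼`,
and strictly so: `x ≼ v` and `F(x) = F(v)` force `d(x,v) = 0`. Along a `≼`-decreasing sequence
starting in `dom φ`, `φ` decreases a.s. and stays above a lower bound, so `d(xₘ,xₙ) ≤ φ(xₘ) - φ(xₙ)`
makes the sequence Cauchy in probability; its limit lies below every term because lower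
semicontinuity makes each lower set `{y : y ≼ x}` closed. The Brezis–Browder ordering principle
then produces `v ≼ x₀` on whose lower set `F` is constant, so no `x ≠ v` satisfies `x ≼ v`.
-/

noncomputable def erealGauge (a : EReal) : ℝ :=
  (ENNReal.logOrderIso.symm.trans ENNReal.orderIsoUnitIntervalBirational a : ℝ)

theorem strictMono_erealGauge : StrictMono erealGauge :=
  (Subtype.strictMono_coe _).comp (OrderIso.strictMono _)

theorem measurable_erealGauge : Measurable erealGauge :=
  strictMono_erealGauge.monotone.measurable

theorem erealGauge_mem_Icc (a : EReal) : erealGauge a ∈ Icc (0 : ℝ) 1 :=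
  Subtype.prop _

/-- The Brezis–Browder ordering principle. -/
theorem exists_mem_forall_mem_eq_of_bddBelow {α : Type*} (S : α → Set α)
    (hrefl : ∀ x, x ∈ S x) (htrans : ∀ x, ∀ y ∈ S x, S y ⊆ S x)
    (F : α → ℝ) (hmono : ∀ x, ∀ y ∈ S x, F y ≤ F x) (hbdd : BddBelow (range F)) (x₀ : α)
    (hlower : ∀ u : ℕ → α, u 0 = x₀ → (∀ n, u (n + 1) ∈ S (u n)) → ∃ v, ∀ n, v ∈ S (u n)) :
    ∃ v ∈ S x₀, ∀ x ∈ S v, F x = F v := by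
  have hsel : ∀ (x : α) (n : ℕ), ∃ y ∈ S x, ∀ z ∈ S x, F y ≤ F z + 1 / (n + 1) := by
    intro x n
    obtain ⟨_, ⟨y, hy, rfl⟩, hlt⟩ := Real.lt_sInf_add_pos (s := F '' S x)
      ⟨F x, x, hrefl x, rfl⟩ (Nat.one_div_pos_of_nat (n := n))
    have hbdd' : BddBelow (F '' S x) := hbdd.mono (image_subset_range F _)
    exact ⟨y, hy, fun z hz => (hlt.trans_le (add_le_add_left (csInf_le hbdd' ⟨z, hz, rfl⟩) _)).le⟩
  choose next hnext_mem hnext_le using hsel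
  let u : ℕ → α := fun n => Nat.rec x₀ (fun k y => next y k) n
  obtain ⟨v, hv⟩ := hlower u rfl fun n => hnext_mem (u n) n
  refine ⟨v, hv 0, fun x hx => le_antisymm (hmono v x hx) ?_⟩
  have hxu : ∀ n, x ∈ S (u n) := fun n => htrans _ v (hv n) hx
  refine le_of_forall_pos_lt_add fun ε hε => ?_
  obtain ⟨n, hn⟩ := exists_nat_one_div_lt hε
  calc F v ≤ F (u (n + 1)) := hmono _ v (hv (n + 1))
    _ ≤ F x + 1 / (n + 1) := hnext_le (u n) n x (hxu n)
    _ < F x + ε := by gcongr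

noncomputable def gaugeMean (P : Measure Ω) (f : Ω → EReal) : ℝ :=
  ∫ ω, erealGauge (f ω) ∂P

section GaugeMean

variable {P : Measure Ω}

theorem gaugeMean_nonneg (f : Ω → EReal) : 0 ≤ gaugeMean P f :=
  integral_nonneg fun ω => (erealGauge_mem_Icc (f ω)).1

variable [IsFiniteMeasure P]

theorem integrable_erealGauge_comp {f : Ω → EReal} (hf : AEMeasurable f P) :
    Integrable (fun ω => erealGauge (f ω)) P := by
  refine .of_bound (measurable_erealGauge.comp_aemeasurable hf).aestronglyMeasurable 1
    (ae_of_all _ fun ω => ?_)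
  obtain ⟨h0, h1⟩ := erealGauge_mem_Icc (f ω)
  rwa [Real.norm_eq_abs, abs_of_nonneg h0]

theorem gaugeMean_mono {f g : Ω → EReal} (hf : AEMeasurable f P) (hg : AEMeasurable g P)
    (hfg : f ≤ᵐ[P] g) : gaugeMean P f ≤ gaugeMean P g :=
  integral_mono_ae (integrable_erealGauge_comp hf) (integrable_erealGauge_comp hg)
    (hfg.mono fun _ h => strictMono_erealGauge.monotone h)

theorem ae_eq_of_ae_le_of_gaugeMean_le {f g : Ω → EReal} (hf : AEMeasurable f P)
    (hg : AEMeasurable g P) (hfg : f ≤ᵐ[P] g) (h : gaugeMean P g ≤ gaugeMean P f) :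
    f =ᵐ[P] g := by
  have hgap : (fun ω => erealGauge (g ω) - erealGauge (f ω)) =ᵐ[P] 0 := by
    refine (integral_eq_zero_iff_of_nonneg_ae
      (hfg.mono fun _ h => sub_nonneg.2 (strictMono_erealGauge.monotone h))
      ((integrable_erealGauge_comp hg).sub (integrable_erealGauge_comp hf))).1 ?_
    rw [integral_sub (integrable_erealGauge_comp hg) (integrable_erealGauge_comp hf)]
    exact le_antisymm (sub_nonpos.2 h) (sub_nonneg.2 (gaugeMean_mono hf hg hfg))
  filter_upwards [hgap] with ω h
  exact strictMono_erealGauge.injective (sub_eq_zero.1 h).symm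

end GaugeMean

namespace RMSpace

variable {P : Measure Ω} {E : Type*} (M : RMSpace P E)

def ekelandSet (φ : E → L0e P) (x : E) : Set E :=
  {y | ∀ᵐ ω ∂P, φ y ω + (M.d x y ω : EReal) ≤ φ x ω}

theorem mem_ekelandSet {φ : E → L0e P} {x y : E} :
    y ∈ M.ekelandSet φ x ↔ ∀ᵐ ω ∂P, φ y ω + (M.d x y ω : EReal) ≤ φ x ω :=
  Iff.rfl

theorem eq_of_ae_d_eq_zero {p q : E} (h : ∀ᵐ ω ∂P, M.d p q ω = 0) : p = q :=
  (M.d_eq_zero_iff p q).1 <|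
    AEEqFun.ext (EventuallyEq.trans h AEEqFun.coeFn_zero.symm)

theorem ae_abs_d_sub_d_le (p q r : E) : ∀ᵐ ω ∂P, |M.d p q ω - M.d p r ω| ≤ M.d q r ω := by
  filter_upwards [M.d_triangle p r q, M.d_triangle p q r] with ω h1 h2
  rw [M.d_symm r q] at h1
  exact abs_sub_le_iff.2 ⟨by linarith, by linarith⟩

theorem cauchySeqEL_of_ae_cauchySeq [IsProbabilityMeasure P] {x : ℕ → E} {u : ℕ → Ω → ℝ}
    (hu : ∀ᵐ ω ∂P, CauchySeq fun n => u n ω)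
    (hd : ∀ m n, ∀ᵐ ω ∂P, M.d (x m) (x n) ω ≤ |u m ω - u n ω|) : M.CauchySeqEL x := by
  intro ε hε lam hlam
  let T : ℕ → Set Ω := fun N => {ω | ∀ m ≥ N, ∀ n ≥ N, M.d (x m) (x n) ω < ε}
  have hT : Monotone T := fun N N' h ω hω m hm n hn => hω m (h.trans hm) n (h.trans hn)
  have hcover : P (⋃ N, T N) = 1 := by
    refine le_antisymm prob_le_one (measure_univ.symm.trans_le (measure_mono_ae ?_))
    filter_upwards [hu, ae_all_iff.2 fun m => ae_all_iff.2 (hd m)] with ω hω hdω _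
    obtain ⟨N, hN⟩ := Metric.cauchySeq_iff.1 hω ε hε
    exact mem_iUnion.2 ⟨N, fun m hm n hn => (hdω m n).trans_lt (hN m hm n hn)⟩
  have hlt : ENNReal.ofReal (1 - lam) < 1 := ENNReal.ofReal_lt_one.2 (by linarith [hlam.1])
  obtain ⟨N, hN⟩ :=
    ((hcover ▸ tendsto_measure_iUnion_atTop hT).eventually (eventually_gt_nhds hlt)).exists
  exact ⟨N, fun m hm n hn => hN.trans_le (measure_mono fun ω hω => hω m hm n hn)⟩

theorem cauchySeqEL_of_d_le_sub [IsProbabilityMeasure P] {x : ℕ → E} {u : ℕ → Ω → ℝ}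
    (hbdd : ∀ᵐ ω ∂P, BddBelow (range fun n => u n ω))
    (hd : ∀ m n, m ≤ n → ∀ᵐ ω ∂P, M.d (x m) (x n) ω ≤ u m ω - u n ω) : M.CauchySeqEL x := by
  have hd' : ∀ᵐ ω ∂P, ∀ m n, m ≤ n → M.d (x m) (x n) ω ≤ u m ω - u n ω :=
    ae_all_iff.2 fun m => ae_all_iff.2 fun n => eventually_imp_distrib_left.2 (hd m n)
  refine M.cauchySeqEL_of_ae_cauchySeq (u := u) ?_ fun m n => ?_
  · filter_upwards [hbdd, hd', ae_all_iff.2 fun m => ae_all_iff.2 fun n => M.d_nonneg (x m) (x n)]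
      with ω hω hdω hpos
    have hanti : Antitone fun n => u n ω := fun m n hmn => by linarith [hdω m n hmn, hpos m n]
    exact (tendsto_atTop_ciInf hanti hω).cauchySeq
  · filter_upwards [hd'] with ω hdω
    rcases le_total m n with hmn | hnm
    · exact (hdω m n hmn).trans (le_abs_self _)
    · rw [M.d_symm, abs_sub_comm]
      exact (hdω n m hnm).trans (le_abs_self _)

theorem tendstoProb_of_ae_abs_sub_le {x : ℕ → E} {a : E} {r : ℕ → L0 P} {s : L0 P}
    (h : ∀ n, ∀ᵐ ω ∂P, |r n ω - s ω| ≤ M.d (x n) a ω) (hx : M.TendstoEL x a) :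
    TendstoProb P r s := by
  intro ε hε lam hlam
  obtain ⟨N, hN⟩ := hx ε hε lam hlam
  refine ⟨N, fun n hn => (hN n hn).trans_le (measure_mono_ae ?_)⟩
  filter_upwards [h n] with ω hω hlt using hω.trans_lt hlt

variable {φ : E → L0e P}

theorem mem_ekelandSet_self (x : E) : x ∈ M.ekelandSet φ x := by
  have hd : (M.d x x : Ω → ℝ) =ᵐ[P] 0 := by
    rw [(M.d_eq_zero_iff x x).2 rfl]
    exact AEEqFun.coeFn_zero
  filter_upwards [hd] with ω hω
  simp [hω]

theorem ekelandSet_subset {x y : E} (hy : y ∈ M.ekelandSet φ x) :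
    M.ekelandSet φ y ⊆ M.ekelandSet φ x := by
  intro z hz
  filter_upwards [hy, hz, M.d_triangle x y z] with ω hxy hyz htri
  calc φ z ω + (M.d x z ω : EReal)
      ≤ φ z ω + ((M.d x y ω + M.d y z ω : ℝ) : EReal) := by gcongr
    _ = (φ z ω + (M.d y z ω : EReal)) + (M.d x y ω : EReal) := by
        rw [EReal.coe_add, add_comm ((M.d x y ω : ℝ) : EReal), ← add_assoc]
    _ ≤ φ y ω + (M.d x y ω : EReal) := by gcongr
    _ ≤ φ x ω := hxy

theorem ae_le_of_mem_ekelandSet {x y : E} (hy : y ∈ M.ekelandSet φ x) :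
    ∀ᵐ ω ∂P, φ y ω ≤ φ x ω := by
  filter_upwards [hy, M.d_nonneg x y] with ω h hd
  exact (le_add_of_nonneg_right (EReal.coe_nonneg.2 hd)).trans h

theorem ae_lt_top_of_mem_ekelandSet {x y : E} (hy : y ∈ M.ekelandSet φ x)
    (hx : ∀ᵐ ω ∂P, φ x ω < ⊤) : ∀ᵐ ω ∂P, φ y ω < ⊤ := by
  filter_upwards [M.ae_le_of_mem_ekelandSet hy, hx] with ω h1 h2 using h1.trans_lt h2

theorem mem_ekelandSet_of_le {u : ℕ → E} (hu : ∀ n, u (n + 1) ∈ M.ekelandSet φ (u n))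
    {m n : ℕ} (hmn : m ≤ n) : u n ∈ M.ekelandSet φ (u m) := by
  induction n, hmn using Nat.le_induction with
  | base => exact M.mem_ekelandSet_self (u m)
  | succ n _ ih => exact M.ekelandSet_subset ih (hu n)

theorem mem_ekelandSet_of_tendstoEL (hlsc : M.LscEL φ) {y : E}
    (hy_top : ∀ᵐ ω ∂P, φ y ω < ⊤) (hy_bot : ∀ᵐ ω ∂P, ⊥ < φ y ω) {x : ℕ → E} {a : E}
    (hx : ∀ n, x n ∈ M.ekelandSet φ y) (hxa : M.TendstoEL x a) : a ∈ M.ekelandSet φ y := by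
  have hmeas : AEStronglyMeasurable (fun ω => (φ y ω).toReal) P :=
    (measurable_ereal_toReal.comp (φ y).measurable).aestronglyMeasurable
  let ψ : L0 P := AEEqFun.mk _ hmeas
  have hψ : ∀ᵐ ω ∂P, (ψ ω : EReal) = φ y ω := by
    filter_upwards [AEEqFun.coeFn_mk _ hmeas, hy_top, hy_bot] with ω h htop hbot
    rw [h, EReal.coe_toReal htop.ne hbot.ne']
  -- membership in `ekelandSet φ y` is membership of `(z, ψ - d(y,z))` in the epigraph of `φ`
  have hepi : ∀ z, z ∈ M.ekelandSet φ y ↔ ∀ᵐ ω ∂P, φ z ω ≤ ((ψ - M.d y z) ω : EReal) := by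
    intro z
    refine (M.mem_ekelandSet).trans (eventually_congr ?_)
    filter_upwards [hψ, AEEqFun.coeFn_sub ψ (M.d y z)] with ω h1 h2
    rw [h2, Pi.sub_apply, EReal.coe_sub, h1, EReal.le_sub_iff_add_le
      (Or.inl (EReal.coe_ne_bot _)) (Or.inl (EReal.coe_ne_top _))]
  refine (hepi a).2 (hlsc x _ a _ (fun n => (hepi (x n)).1 (hx n)) hxa
    (M.tendstoProb_of_ae_abs_sub_le (fun n => ?_) hxa))
  filter_upwards [AEEqFun.coeFn_sub ψ (M.d y (x n)), AEEqFun.coeFn_sub ψ (M.d y a),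
    M.ae_abs_d_sub_d_le y a (x n)] with ω h1 h2 h3
  rwa [h1, h2, Pi.sub_apply, Pi.sub_apply, _root_.sub_sub_sub_cancel_left, M.d_symm (x n) a]

theorem exists_forall_mem_ekelandSet [IsProbabilityMeasure P] (hcomp : M.CompleteEL)
    (hlsc : M.LscEL φ) {ξ : L0 P} (hξ : ∀ x, ∀ᵐ ω ∂P, (ξ ω : EReal) ≤ φ x ω) {u : ℕ → E}
    (hu0 : ∀ᵐ ω ∂P, φ (u 0) ω < ⊤) (hu : ∀ n, u (n + 1) ∈ M.ekelandSet φ (u n)) :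
    ∃ v, ∀ n, v ∈ M.ekelandSet φ (u n) := by
  have hbot : ∀ x, ∀ᵐ ω ∂P, ⊥ < φ x ω := fun x =>
    (hξ x).mono fun _ h => (EReal.bot_lt_coe _).trans_le h
  have htop : ∀ n, ∀ᵐ ω ∂P, φ (u n) ω < ⊤ := fun n =>
    M.ae_lt_top_of_mem_ekelandSet (M.mem_ekelandSet_of_le hu n.zero_le) hu0
  let ψ : ℕ → Ω → ℝ := fun n ω => (φ (u n) ω).toReal
  have hψ : ∀ n, ∀ᵐ ω ∂P, (ψ n ω : EReal) = φ (u n) ω := fun n => by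
    filter_upwards [htop n, hbot (u n)] with ω h1 h2 using EReal.coe_toReal h1.ne h2.ne'
  have hcauchy : M.CauchySeqEL u := by
    refine M.cauchySeqEL_of_d_le_sub (u := ψ) ?_ fun m n hmn => ?_
    · filter_upwards [ae_all_iff.2 fun n => hξ (u n), ae_all_iff.2 hψ] with ω hξω hψω
      exact ⟨ξ ω, forall_mem_range.2 fun n =>
        EReal.coe_le_coe_iff.1 ((hξω n).trans_eq (hψω n).symm)⟩
    · filter_upwards [M.mem_ekelandSet_of_le hu hmn, hψ m, hψ n] with ω h hm hn
      rw [← hm, ← hn, ← EReal.coe_add, EReal.coe_le_coe_iff] at h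
      linarith
  obtain ⟨v, hv⟩ := hcomp u hcauchy
  refine ⟨v, fun n => M.mem_ekelandSet_of_tendstoEL hlsc (htop n) (hbot (u n))
    (x := fun m => u (n + m)) (fun m => M.mem_ekelandSet_of_le hu (n.le_add_right m)) ?_⟩
  intro ε hε lam hlam
  obtain ⟨N, hN⟩ := hv ε hε lam hlam
  exact ⟨N, fun m hm => hN (n + m) (hm.trans (m.le_add_left n))⟩

theorem eq_of_mem_ekelandSet_of_gaugeMean_eq [IsFiniteMeasure P] {v x : E}
    (hv : ∀ᵐ ω ∂P, φ v ω < ⊤) (hx_bot : ∀ᵐ ω ∂P, ⊥ < φ x ω) (hx : x ∈ M.ekelandSet φ v)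
    (hF : gaugeMean P (φ x) = gaugeMean P (φ v)) : x = v := by
  let g : Ω → EReal := fun ω => φ x ω + (M.d v x ω : EReal)
  have hg : AEMeasurable g P :=
    (φ x).aemeasurable.add (measurable_coe_real_ereal.comp (M.d v x).measurable).aemeasurable
  have hφg : (φ x : Ω → EReal) ≤ᵐ[P] g := (M.d_nonneg v x).mono fun _ h =>
    le_add_of_nonneg_right (EReal.coe_nonneg.2 h)
  have heq : (φ x : Ω → EReal) =ᵐ[P] g :=
    ae_eq_of_ae_le_of_gaugeMean_le (φ x).aemeasurable hg hφg <| hF ▸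
    gaugeMean_mono hg (φ v).aemeasurable hx
  refine (M.eq_of_ae_d_eq_zero ?_).symm
  filter_upwards [heq, hx_bot, M.ae_lt_top_of_mem_ekelandSet hx hv] with ω h hbot htop
  change φ x ω = φ x ω + (M.d v x ω : EReal) at h
  lift (φ x ω) to ℝ using ⟨htop.ne, hbot.ne'⟩ with r
  rw [← EReal.coe_add, EReal.coe_eq_coe_iff] at h
  linarith

end RMSpace

theorem ekeland_RM_EL_general
    {Ω : Type*} [MeasurableSpace Ω] {P : Measure Ω} [IsProbabilityMeasure P]
    {E : Type*} (M : RMSpace P E) (hcomp : M.CompleteEL)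
    (φ : E → L0e P)
    (hlsc : M.LscEL φ) (hbdd : BddBelowOn φ Set.univ)
    (x₀ : E) (hx₀ : ∀ᵐ ω ∂P, φ x₀ ω < ⊤) :
    ∃ v : E, (∀ᵐ ω ∂P, φ v ω < ⊤) ∧
      (∀ᵐ ω ∂P, φ v ω + (M.d x₀ v ω : EReal) ≤ φ x₀ ω) ∧
      ∀ x : E, x ≠ v → ∃ A : Set Ω, MeasurableSet A ∧ 0 < P A ∧
        ∀ᵐ ω ∂P, ω ∈ A → φ v ω < φ x ω + (M.d x v ω : EReal) := by
  obtain ⟨ξ, hξ⟩ := hbdd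
  replace hξ : ∀ x, ∀ᵐ ω ∂P, (ξ ω : EReal) ≤ φ x ω := fun x => hξ x (mem_univ x)
  obtain ⟨v, hv₀, hvF⟩ := exists_mem_forall_mem_eq_of_bddBelow (M.ekelandSet φ)
    M.mem_ekelandSet_self (fun _ _ => M.ekelandSet_subset) (fun x => gaugeMean P (φ x))
    (fun _ _ hy => gaugeMean_mono (φ _).aemeasurable (φ _).aemeasurable
      (M.ae_le_of_mem_ekelandSet hy))
    ⟨0, forall_mem_range.2 fun _ => gaugeMean_nonneg _⟩ x₀
    fun u hu0 hu => M.exists_forall_mem_ekelandSet hcomp hlsc hξ (hu0 ▸ hx₀) hu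
  have hv_top := M.ae_lt_top_of_mem_ekelandSet hv₀ hx₀
  refine ⟨v, hv_top, hv₀, fun x hxv => ⟨_, ?_, pos_iff_ne_zero.2 fun hA => hxv ?_,
    ae_of_all _ fun _ h => h⟩⟩
  · exact measurableSet_lt (φ v).measurable
      ((φ x).measurable.add (measurable_coe_real_ereal.comp (M.d x v).measurable))
  · have hx : x ∈ M.ekelandSet φ v := by
      filter_upwards [measure_eq_zero_iff_ae_notMem.1 hA] with ω h
      rw [M.d_symm v x]
      exact not_lt.1 h
    exact M.eq_of_mem_ekelandSet_of_gaugeMean_eq hv_top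
      ((hξ x).mono fun _ h => (EReal.bot_lt_coe _).trans_le h) hx (hvF x hx)

/-- Theorem 2.10: Ekeland's variational principle on a
`d_{ε,λ}`-complete random metric space. For each `x₀ ∈ dom(φ)` there is `v ∈ dom(φ)` with
(1) `φ(v) ≤ φ(x₀) - d(x₀,v)` and (2) for every `x ≠ v`, `φ(x) ≰ φ(v) - d(x,v)`, i.e.
there is `A_x ∈ 𝓕` with `P(A_x) > 0` and `φ(x) > φ(v) - d(x,v)` a.s. on `A_x`. -/
theorem ekeland_RM_EL
    {Ω : Type*} [MeasurableSpace Ω] {P : Measure Ω} [IsProbabilityMeasure P]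
    {E : Type*} (M : RMSpace P E) (hcomp : M.CompleteEL)
    (φ : E → L0e P)
    (hproper : ProperOn φ Set.univ) (hlsc : M.LscEL φ) (hbdd : BddBelowOn φ Set.univ)
    (x₀ : E) (hx₀ : ∀ᵐ ω ∂P, φ x₀ ω < ⊤) :
    ∃ v : E, (∀ᵐ ω ∂P, φ v ω < ⊤) ∧
      (∀ᵐ ω ∂P, φ v ω + (M.d x₀ v ω : EReal) ≤ φ x₀ ω) ∧
      ∀ x : E, x ≠ v → ∃ A : Set Ω, MeasurableSet A ∧ 0 < P A ∧
        ∀ᵐ ω ∂P, ω ∈ A → φ v ω < φ x ω + (M.d x v ω : EReal) :=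
  ekeland_RM_EL_general M hcomp φ hlsc hbdd x₀ hx₀

end GYY
end

section
/- Let (E,d) be a d_{ε,λ}-complete random metric space with base (Ω,𝓕,P) and φ : E → L̄⁰(𝓕) a proper, 𝒯_{ε,λ}-lower semicontinuous function which is bounded from below. Then there exists v ∈ E such that for every x ∈ E with x ≠ v, φ(x) ≰ φ(v) − d(x,v), i.e. there exists A_x ∈ 𝓕 with P(A_x) > 0 such that φ(x) > φ(v) − d(x,v) a.s. on A_x. -/
open MeasureTheory ENNReal Set Filter

namespace GYY

variable {Ω : Type*} [MeasurableSpace Ω]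

/-! Write `y ≼ x` for `φ(y) + d(y,x) ≤ φ(x)` a.s. and scalarize by `F(y) = E[arctan φ(y)]`,
which is bounded and strictly monotone on a.s. finite values. From a point where `φ` is finite,
choose `x_{n+1} ≼ x_n` with `F(x_{n+1}) ≤ inf {F(y) : y ≼ x_n} + 1/(n+1)`. Along this chain
`φ(x_n)` decreases a.s. to a finite limit (`φ` is bounded below) and
`d(x_m,x_n) ≤ φ(x_n) - φ(x_m)`, so `(x_n)` is Cauchy in probability. Its limit `v` satisfies
`v ≼ x_n` for all `n` by lower semicontinuity. Any `x ≼ v` then has `F(x) ≥ F(v)`, which together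
with `φ(x) ≤ φ(v)` forces `φ(x) = φ(v)` a.s., hence `d(x,v) = 0`. -/

open Real Topology

theorem exists_chain_approx_minimizing {α : Type*} (r : α → α → Prop) (hrefl : ∀ x, r x x)
    (htrans : ∀ {x y z}, r x y → r y z → r x z) (F : α → ℝ) (hF : BddBelow (range F))
    (x₀ : α) (ε : ℕ → ℝ) (hε : ∀ n, 0 < ε n) :
    ∃ x : ℕ → α, x 0 = x₀ ∧ (∀ n m, n ≤ m → r (x m) (x n)) ∧
      ∀ n y, r y (x n) → F (x (n + 1)) ≤ F y + ε n := by
  have hstep : ∀ n a, ∃ b, r b a ∧ ∀ y, r y a → F b ≤ F y + ε n := by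
    intro n a
    have hne : (F '' {y | r y a}).Nonempty := ⟨F a, a, hrefl a, rfl⟩
    obtain ⟨_, ⟨b, hb, rfl⟩, hlt⟩ :=
      exists_lt_of_csInf_lt hne (lt_add_of_pos_right _ (hε n))
    refine ⟨b, hb, fun y hy => hlt.le.trans ?_⟩
    gcongr
    exact csInf_le (hF.mono (image_subset_range _ _)) ⟨y, hy, rfl⟩
  choose step hstep_r hstep_le using hstep
  let x : ℕ → α := fun n => Nat.rec (motive := fun _ => α) x₀ step n
  refine ⟨x, rfl, fun n m hnm => ?_, fun n => hstep_le n (x n)⟩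
  induction m, hnm using Nat.le_induction with
  | base => exact hrefl _
  | succ m _ ih => exact htrans (hstep_r m (x m)) ih

section Probability

variable {P : Measure Ω}

theorem exists_measurableSet_pos_ae_lt_of_not_ae_le {β : Type*} [LinearOrder β]
    [TopologicalSpace β] [OrderClosedTopology β] [TopologicalSpace.PseudoMetrizableSpace β]
    {f g : Ω → β} (hf : AEStronglyMeasurable f P) (hg : AEStronglyMeasurable g P)
    (h : ¬ ∀ᵐ ω ∂P, g ω ≤ f ω) :
    ∃ A : Set Ω, MeasurableSet A ∧ 0 < P A ∧ ∀ᵐ ω ∂P, ω ∈ A → f ω < g ω := by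
  obtain ⟨A, hsA, hAm, hAs⟩ := (hf.nullMeasurableSet_lt hg).exists_measurable_superset_ae_eq
  refine ⟨A, hAm, pos_iff_ne_zero.2 fun hA => h ?_, ?_⟩
  · filter_upwards [measure_eq_zero_iff_ae_notMem.1 (measure_mono_null hsA hA)] with ω hω
    exact not_lt.1 hω
  · filter_upwards [hAs.mem_iff] with ω hω hωA
    exact hω.1 hωA

theorem tendstoProb_of_tendstoInMeasure [IsProbabilityMeasure P] {r : ℕ → L0 P} {s : L0 P}
    (h : TendstoInMeasure P (fun n => ⇑(r n)) atTop s) : TendstoProb P r s := by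
  intro ε hε lam hlam
  obtain ⟨N, hN⟩ := (((tendstoInMeasure_iff_norm.1 h) ε hε).eventually_lt_const
    (ENNReal.ofReal_pos.2 hlam.1)).exists_forall_of_atTop
  refine ⟨N, fun n hn => ?_⟩
  have hmeas : MeasurableSet {ω | ε ≤ ‖r n ω - s ω‖} :=
    measurableSet_le measurable_const
      ((r n).stronglyMeasurable.measurable.sub s.stronglyMeasurable.measurable).norm
  have hcompl : {ω | |r n ω - s ω| < ε} = {ω | ε ≤ ‖r n ω - s ω‖}ᶜ := by
    ext ω
    simp [Real.norm_eq_abs]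
  rw [hcompl, prob_compl_eq_one_sub hmeas, ENNReal.ofReal_sub _ hlam.1.le, ENNReal.ofReal_one]
  exact ((ENNReal.cancel_of_ne ENNReal.one_ne_top).tsub_lt_tsub_iff_left_of_le
    (ENNReal.cancel_of_ne ENNReal.ofReal_ne_top) (ENNReal.ofReal_le_one.2 hlam.2.le)).2 (hN n hn)

theorem exists_tendstoProb_of_antitone [IsProbabilityMeasure P] {ζ : ℕ → L0 P} {ξ : L0 P}
    (hanti : ∀ n, ∀ᵐ ω ∂P, ζ (n + 1) ω ≤ ζ n ω) (hξ : ∀ n, ∀ᵐ ω ∂P, ξ ω ≤ ζ n ω) :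
    ∃ L : L0 P, (∀ n, ∀ᵐ ω ∂P, L ω ≤ ζ n ω) ∧ TendstoProb P ζ L := by
  have hgood : ∀ᵐ ω ∂P, Antitone (fun n => ζ n ω) ∧ BddBelow (range fun n => ζ n ω) := by
    filter_upwards [ae_all_iff.2 hanti, ae_all_iff.2 hξ] with ω h1 h2
    exact ⟨antitone_nat_of_succ_le h1, ξ ω, forall_mem_range.2 h2⟩
  have hlim : ∀ᵐ ω ∂P, Tendsto (fun n => ζ n ω) atTop (𝓝 (⨅ n, ζ n ω)) := by
    filter_upwards [hgood] with ω h
    exact tendsto_atTop_ciInf h.1 h.2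
  have hmeas : AEStronglyMeasurable (fun ω => ⨅ n, ζ n ω) P :=
    aestronglyMeasurable_of_tendsto_ae atTop (fun n => (ζ n).aestronglyMeasurable) hlim
  refine ⟨AEEqFun.mk _ hmeas, fun n => ?_, tendstoProb_of_tendstoInMeasure ?_⟩
  · filter_upwards [AEEqFun.coeFn_mk _ hmeas, hgood] with ω h1 h2
    rw [h1]
    exact ciInf_le h2.2 n
  · exact (tendstoInMeasure_of_tendsto_ae (fun n => (ζ n).aestronglyMeasurable) hlim).congr_right
      (AEEqFun.coeFn_mk _ hmeas).symm

def AEFinite (f : L0e P) : Prop := ∀ᵐ ω ∂P, f ω ≠ ⊥ ∧ f ω ≠ ⊤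

theorem AEFinite.exists_coe_eq {f : L0e P} (hf : AEFinite f) :
    ∃ ζ : L0 P, ∀ᵐ ω ∂P, (ζ ω : EReal) = f ω := by
  have hm : AEStronglyMeasurable (fun ω => (f ω).toReal) P :=
    f.aemeasurable.ereal_toReal.aestronglyMeasurable
  refine ⟨AEEqFun.mk _ hm, ?_⟩
  filter_upwards [AEEqFun.coeFn_mk _ hm, hf] with ω h1 h2
  rw [h1]
  exact EReal.coe_toReal h2.2 h2.1

noncomputable def arctanMean (f : L0e P) : ℝ := ∫ ω, arctan (f ω).toReal ∂P

theorem integrable_arctan_toReal [IsFiniteMeasure P] (f : L0e P) :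
    Integrable (fun ω => arctan (f ω).toReal) P :=
  .of_bound (continuous_arctan.measurable.comp_aemeasurable
    f.aemeasurable.ereal_toReal).aestronglyMeasurable (π / 2) <| ae_of_all _ fun ω => by
      rw [Real.norm_eq_abs, abs_le]
      exact ⟨(neg_pi_div_two_lt_arctan _).le, (arctan_lt_pi_div_two _).le⟩

theorem neg_pi_div_two_le_arctanMean [IsProbabilityMeasure P] (f : L0e P) :
    -(π / 2) ≤ arctanMean f := by
  simpa [arctanMean] using integral_mono (integrable_const _) (integrable_arctan_toReal f)
    fun ω => (neg_pi_div_two_lt_arctan (f ω).toReal).le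

theorem arctan_toReal_ae_le {f g : L0e P} (hf : AEFinite f) (hg : AEFinite g)
    (hfg : ∀ᵐ ω ∂P, f ω ≤ g ω) :
    (fun ω => arctan (f ω).toReal) ≤ᵐ[P] fun ω => arctan (g ω).toReal := by
  filter_upwards [hf, hg, hfg] with ω h1 h2 h3
  exact arctan_strictMono.monotone (EReal.toReal_le_toReal h3 h1.1 h2.2)

theorem arctanMean_mono [IsFiniteMeasure P] {f g : L0e P} (hf : AEFinite f) (hg : AEFinite g)
    (hfg : ∀ᵐ ω ∂P, f ω ≤ g ω) : arctanMean f ≤ arctanMean g :=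
  integral_mono_ae (integrable_arctan_toReal f) (integrable_arctan_toReal g)
    (arctan_toReal_ae_le hf hg hfg)

theorem ae_eq_of_ae_le_of_arctanMean_le [IsFiniteMeasure P] {f g : L0e P} (hf : AEFinite f)
    (hg : AEFinite g) (hfg : ∀ᵐ ω ∂P, f ω ≤ g ω) (h : arctanMean g ≤ arctanMean f) :
    ∀ᵐ ω ∂P, f ω = g ω := by
  have heq := (integral_eq_iff_of_ae_le (integrable_arctan_toReal f)
    (integrable_arctan_toReal g) (arctan_toReal_ae_le hf hg hfg)).1
    ((arctanMean_mono hf hg hfg).antisymm h)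
  filter_upwards [heq, hf, hg] with ω h1 h2 h3
  rw [← EReal.coe_toReal h2.2 h2.1, ← EReal.coe_toReal h3.2 h3.1, arctan_injective h1]

end Probability

namespace RMSpace

variable {P : Measure Ω} {E : Type*} (M : RMSpace P E)

theorem abs_d_sub_d_le (p q r : E) : ∀ᵐ ω ∂P, |M.d p r ω - M.d q r ω| ≤ M.d p q ω := by
  filter_upwards [M.d_triangle p q r, M.d_triangle q p r] with ω h1 h2
  rw [M.d_symm q p] at h2
  exact abs_sub_le_iff.2 ⟨by linarith, by linarith⟩

theorem TendstoEL.comp_add {M : RMSpace P E} {x : ℕ → E} {a : E} (h : M.TendstoEL x a) (k : ℕ) :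
    M.TendstoEL (fun n => x (n + k)) a :=
  fun ε hε lam hlam => (h ε hε lam hlam).imp fun _ hN n hn => hN (n + k) (by omega)

theorem tendstoProb_of_abs_sub_le {x : ℕ → E} {v : E} {r : ℕ → L0 P} {s : L0 P}
    (hx : M.TendstoEL x v) (hrs : ∀ n, ∀ᵐ ω ∂P, |r n ω - s ω| ≤ M.d (x n) v ω) :
    TendstoProb P r s :=
  fun ε hε lam hlam => (hx ε hε lam hlam).imp fun _ hN n hn =>
    (hN n hn).trans_le <| measure_mono_ae <| by
      filter_upwards [hrs n] with ω h1 h2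
      exact h1.trans_lt h2

theorem cauchySeqEL_of_d_add_le [IsProbabilityMeasure P] {x : ℕ → E} {ζ : ℕ → L0 P} {ξ : L0 P}
    (hd : ∀ n m, n ≤ m → ∀ᵐ ω ∂P, M.d (x m) (x n) ω + ζ m ω ≤ ζ n ω)
    (hξ : ∀ n, ∀ᵐ ω ∂P, ξ ω ≤ ζ n ω) : M.CauchySeqEL x := by
  have hanti : ∀ n, ∀ᵐ ω ∂P, ζ (n + 1) ω ≤ ζ n ω := fun n => by
    filter_upwards [hd n (n + 1) n.le_succ, M.d_nonneg (x (n + 1)) (x n)] with ω h1 h2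
    linarith
  obtain ⟨L, hL, hζL⟩ := exists_tendstoProb_of_antitone hanti hξ
  have hle : ∀ ε : ℝ, 0 < ε → ∀ lam ∈ Ioo (0 : ℝ) 1, ∃ N, ∀ n m, N ≤ n → n ≤ m →
      ENNReal.ofReal (1 - lam) < P {ω | M.d (x m) (x n) ω < ε} := by
    intro ε hε lam hlam
    obtain ⟨N, hN⟩ := hζL ε hε lam hlam
    refine ⟨N, fun n m hNn hnm => (hN N le_rfl).trans_le (measure_mono_ae ?_)⟩
    filter_upwards [hd n m hnm, hd N n hNn, M.d_nonneg (x n) (x N), hL m] with ω h1 h2 h3 h4 hω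
    have := (abs_lt.1 hω).2
    show M.d (x m) (x n) ω < ε
    linarith
  intro ε hε lam hlam
  obtain ⟨N, hN⟩ := hle ε hε lam hlam
  refine ⟨N, fun m hm n hn => ?_⟩
  rcases le_total n m with h | h
  · exact hN n m hn h
  · rw [M.d_symm]
    exact hN m n hm h

variable (φ : E → L0e P)

def EkelandLE (y x : E) : Prop := ∀ᵐ ω ∂P, φ y ω + (M.d y x ω : EReal) ≤ φ x ω

theorem ekelandLE_refl (x : E) : M.EkelandLE φ x x := by
  filter_upwards [show ∀ᵐ ω ∂P, M.d x x ω = 0 by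
    rw [(M.d_eq_zero_iff x x).2 rfl]; exact AEEqFun.coeFn_zero] with ω hω
  simp [hω]

variable {M φ}

theorem EkelandLE.trans {z y x : E} (h₁ : M.EkelandLE φ z y) (h₂ : M.EkelandLE φ y x) :
    M.EkelandLE φ z x := by
  filter_upwards [h₁, h₂, M.d_triangle z y x] with ω hzy hyx htri
  calc φ z ω + (M.d z x ω : EReal)
      ≤ φ z ω + (M.d z y ω : EReal) + (M.d y x ω : EReal) := by
        rw [add_assoc, ← EReal.coe_add]; gcongr
    _ ≤ φ y ω + (M.d y x ω : EReal) := by gcongr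
    _ ≤ φ x ω := hyx

theorem EkelandLE.ae_le {y x : E} (h : M.EkelandLE φ y x) : ∀ᵐ ω ∂P, φ y ω ≤ φ x ω := by
  filter_upwards [h, M.d_nonneg y x] with ω h1 h2
  exact (le_add_of_nonneg_right (by exact_mod_cast h2)).trans h1

theorem EkelandLE.aeFinite {y x : E} (h : M.EkelandLE φ y x) (hx : AEFinite (φ x))
    (hy : ∀ᵐ ω ∂P, ⊥ < φ y ω) : AEFinite (φ y) := by
  filter_upwards [h.ae_le, hx, hy] with ω h1 h2 h3
  exact ⟨h3.ne', (h1.trans_lt (lt_top_iff_ne_top.2 h2.2)).ne⟩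

theorem EkelandLE.eq_of_arctanMean_le [IsFiniteMeasure P] {x v : E} (h : M.EkelandLE φ x v)
    (hv : AEFinite (φ v)) (hx : ∀ᵐ ω ∂P, ⊥ < φ x ω)
    (hF : arctanMean (φ v) ≤ arctanMean (φ x)) : x = v := by
  have hxfin := h.aeFinite hv hx
  have heq := ae_eq_of_ae_le_of_arctanMean_le hxfin hv h.ae_le hF
  refine (M.d_eq_zero_iff x v).1 (AEEqFun.ext ?_)
  filter_upwards [h, heq, hv, M.d_nonneg x v, AEEqFun.coeFn_zero (β := ℝ)]
    with ω h1 h2 h3 h4 h5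
  rw [h2, ← EReal.coe_toReal h3.2 h3.1, ← EReal.coe_add] at h1
  rw [h5, Pi.zero_apply]
  exact le_antisymm (by linarith [EReal.coe_le_coe_iff.1 h1]) h4

theorem cauchySeqEL_of_ekelandLE [IsProbabilityMeasure P] {x : ℕ → E}
    (hchain : ∀ n m, n ≤ m → M.EkelandLE φ (x m) (x n)) (hfin : ∀ n, AEFinite (φ (x n)))
    (hbdd : BddBelowOn φ (range x)) : M.CauchySeqEL x := by
  choose ζ hζ using fun n => (hfin n).exists_coe_eq
  obtain ⟨ξ, hξ⟩ := hbdd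
  refine M.cauchySeqEL_of_d_add_le (ζ := ζ) (ξ := ξ) (fun n m hnm => ?_) fun n => ?_
  · filter_upwards [hchain n m hnm, hζ n, hζ m] with ω h1 h2 h3
    rw [← h2, ← h3, ← EReal.coe_add, EReal.coe_le_coe_iff] at h1
    linarith
  · filter_upwards [hξ _ (mem_range_self n), hζ n] with ω h1 h2
    rwa [← h2, EReal.coe_le_coe_iff] at h1

theorem LscEL.ekelandLE_of_tendstoEL (hlsc : M.LscEL φ) {x : ℕ → E} {a v : E}
    (ha : AEFinite (φ a)) (hx : ∀ n, M.EkelandLE φ (x n) a) (hxv : M.TendstoEL x v) :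
    M.EkelandLE φ v a := by
  obtain ⟨ζ, hζ⟩ := ha.exists_coe_eq
  have hr : ∀ n, ∀ᵐ ω ∂P, φ (x n) ω ≤ ((ζ - M.d (x n) a) ω : EReal) := fun n => by
    filter_upwards [hx n, hζ, AEEqFun.coeFn_sub ζ (M.d (x n) a)] with ω h1 h2 h3
    rw [h3, Pi.sub_apply, EReal.coe_sub, h2]
    exact (EReal.le_sub_iff_add_le (.inl (EReal.coe_ne_bot _)) (.inl (EReal.coe_ne_top _))).2 h1
  have hrs : TendstoProb P (fun n => ζ - M.d (x n) a) (ζ - M.d v a) :=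
    M.tendstoProb_of_abs_sub_le hxv fun n => by
      filter_upwards [AEEqFun.coeFn_sub ζ (M.d (x n) a), AEEqFun.coeFn_sub ζ (M.d v a),
        M.abs_d_sub_d_le v (x n) a] with ω h1 h2 h3
      rw [h1, h2, Pi.sub_apply, Pi.sub_apply, M.d_symm (x n) v]
      convert h3 using 2
      ring
  filter_upwards [hlsc x _ v _ hr hxv hrs, hζ, AEEqFun.coeFn_sub ζ (M.d v a)] with ω h1 h2 h3
  rw [h3, Pi.sub_apply, EReal.coe_sub, h2] at h1
  exact (EReal.le_sub_iff_add_le (.inl (EReal.coe_ne_bot _)) (.inl (EReal.coe_ne_top _))).1 h1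

end RMSpace

/-- Theorem 2.11. There exists `v ∈ E` such that
`φ(x) ≰ φ(v) - d(x,v)` for all `x ≠ v`, i.e. for each `x ≠ v` there is `A_x ∈ 𝓕` with
`P(A_x) > 0` and `φ(x) > φ(v) - d(x,v)` a.s. on `A_x`. -/
theorem ekeland_RM_EL'
    {Ω : Type*} [MeasurableSpace Ω] {P : Measure Ω} [IsProbabilityMeasure P]
    {E : Type*} (M : RMSpace P E) (hcomp : M.CompleteEL)
    (φ : E → L0e P)
    (hproper : ProperOn φ Set.univ) (hlsc : M.LscEL φ) (hbdd : BddBelowOn φ Set.univ) :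
    ∃ v : E, ∀ x : E, x ≠ v → ∃ A : Set Ω, MeasurableSet A ∧ 0 < P A ∧
      ∀ᵐ ω ∂P, ω ∈ A → φ v ω < φ x ω + (M.d x v ω : EReal) := by
  obtain ⟨hbot, x₀, -, hx₀⟩ := hproper
  replace hbot : ∀ x, ∀ᵐ ω ∂P, ⊥ < φ x ω := fun x => hbot x (mem_univ x)
  obtain ⟨xs, rfl, hchain, hnear⟩ := exists_chain_approx_minimizing (M.EkelandLE φ)
    (M.ekelandLE_refl φ) .trans (fun x => arctanMean (φ x))
    ⟨-(π / 2), forall_mem_range.2 fun x => neg_pi_div_two_le_arctanMean (φ x)⟩ x₀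
    (fun n => 1 / (n + 1)) fun n => Nat.one_div_pos_of_nat
  have hfin : ∀ n, AEFinite (φ (xs n)) := fun n =>
    (hchain 0 n n.zero_le).aeFinite
      (by filter_upwards [hbot (xs 0), hx₀] with ω h1 h2 using ⟨h1.ne', h2.ne⟩) (hbot _)
  obtain ⟨v, hv⟩ := hcomp xs <| M.cauchySeqEL_of_ekelandLE hchain hfin <|
    hbdd.imp fun _ hξ y _ => hξ y (mem_univ y)
  have hvle : ∀ n, M.EkelandLE φ v (xs n) := fun n =>
    hlsc.ekelandLE_of_tendstoEL (hfin n) (fun m => hchain n (m + n) (Nat.le_add_left n m))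
      (hv.comp_add n)
  have hvfin : AEFinite (φ v) := (hvle 0).aeFinite (hfin 0) (hbot v)
  refine ⟨v, fun x hxv => exists_measurableSet_pos_ae_lt_of_not_ae_le
    (φ v).aestronglyMeasurable ((φ x).aemeasurable.add
      (M.d x v).aemeasurable.coe_real_ereal).aestronglyMeasurable
    fun (hxv' : M.EkelandLE φ x v) => hxv (hxv'.eq_of_arctanMean_le hvfin (hbot x) ?_)⟩
  have hmin : ∀ n : ℕ, arctanMean (φ v) ≤ arctanMean (φ x) + 1 / (n + 1) := fun n =>
    (arctanMean_mono hvfin (hfin (n + 1)) (hvle (n + 1)).ae_le).trans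
      (hnear n x (hxv'.trans (hvle n)))
  simpa using ge_of_tendsto' (tendsto_const_nhds.add tendsto_one_div_add_atTop_nhds_zero_nat) hmin

end GYY
end
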